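/- arXiv:2510.07744 — 2 statements merged into one kernel-verified Lean document; each statement's English description precedes it below -/
import Mathlib

section
/- Let P, Q ∈ SYT(r×c), n = rc, S = stack(P,Q), with x_{ij} the entry in row i, column j of Q, y_{ij} the entry in row i, column j of ∂(P), S_{kj} := {(x_{sj}, y_{tj}) : 1 ≤ s,t ≤ r, s+t−1 = k} for 1 ≤ k ≤ 2r−1, and S_{0,j} = S_{2r,j} := ∅. Then for each 1 ≤ j ≤ c: if r ≤ k ≤ 2r−1 then 𝒮(S_{kj}, ↗) = S_{k+1,j}, and if 1 ≤ k ≤ r then 𝒮(S_{kj}, ↙) = S_{k−1,j}. -/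
namespace PromRS

/-! ## Rectangular standard Young tableaux (as functions; 0-indexed cells; entries 1..R*C) -/

/-- `T` is a standard Young tableau of rectangular shape with `R` rows and `C` columns:
rows and columns strictly increase, and the entries on the `R × C` rectangle are a
bijection onto `{1, …, R*C}`. -/
def IsSYT (R C : ℕ) (T : ℕ → ℕ → ℕ) : Prop :=
  (∀ i j, i < R → j + 1 < C → T i j < T i (j + 1)) ∧
  (∀ i j, i + 1 < R → j < C → T i j < T (i + 1) j) ∧
  Set.BijOn (fun p : ℕ × ℕ => T p.1 p.2) {p : ℕ × ℕ | p.1 < R ∧ p.2 < C} (Set.Icc 1 (R * C))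

/-- Stacking: add `r*c` to every entry of `Q` and place the result below `P`. -/
def stack (r c : ℕ) (P Q : ℕ → ℕ → ℕ) : ℕ → ℕ → ℕ := fun i j =>
  if i < r then P i j else Q (i - r) j + r * c

/-! ## Gromotion and promotion permutations -/

/-- Value of `T` at a cell, with `⊤` outside the `R × C` rectangle. -/
def ext (R C : ℕ) (T : ℕ → ℕ → ℕ) (p : ℕ × ℕ) : WithTop ℕ :=
  if p.1 < R ∧ p.2 < C then ((T p.1 p.2 : ℕ) : WithTop ℕ) else ⊤

/-- The jeu de taquin slide moves the empty cell to the smaller of its east/south neighbors. -/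
def nextCell (R C : ℕ) (T : ℕ → ℕ → ℕ) (p : ℕ × ℕ) : ℕ × ℕ :=
  if ext R C T (p.1, p.2 + 1) < ext R C T (p.1 + 1, p.2) then (p.1, p.2 + 1)
  else (p.1 + 1, p.2)

/-- The sliding path of the empty cell, starting at the top-left corner. -/
def slidePath (R C : ℕ) (T : ℕ → ℕ → ℕ) : ℕ → ℕ × ℕ
  | 0 => (0, 0)
  | k + 1 => nextCell R C T (slidePath R C T k)

def maxEntry (R C : ℕ) (T : ℕ → ℕ → ℕ) : ℕ :=
  ((Finset.range R) ×ˢ (Finset.range C)).sup fun p => T p.1 p.2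

/-- Gromotion: delete the minimal entry (at the top-left corner), rectify by jeu de taquin
slides, and fill the vacated outer corner with (current maximum) + 1; entries are not
decremented. -/
def gromotion (R C : ℕ) (T : ℕ → ℕ → ℕ) : ℕ → ℕ → ℕ := fun i j =>
  if i = R - 1 ∧ j = C - 1 then maxEntry R C T + 1
  else
    match (List.range (R + C - 2)).find? (fun k => decide (slidePath R C T k = (i, j))) with
    | some k => T (slidePath R C T (k + 1)).1 (slidePath R C T (k + 1)).2
    | none => T i j

/-- The entry that slides (up) into row `i` (1-indexed) during one gromotion slide of `T`:
the value of `T` at the first cell of the sliding path lying in 0-indexed row `i`. -/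
def slideInto (R C : ℕ) (T : ℕ → ℕ → ℕ) (i : ℕ) : ℕ :=
  match (List.range (R + C - 1)).find? (fun k => decide ((slidePath R C T k).1 = i)) with
  | some k => T (slidePath R C T k).1 (slidePath R C T k).2
  | none => 0

/-- The `i`-th promotion permutation of `T ∈ SYT(R × C)`: its value at `j` is the entry
that slides into row `i` when computing `gromotion^j(T)`, taken modulo `R*C` with
residues in `{1, …, R*C}`. -/
def promPerm (R C : ℕ) (T : ℕ → ℕ → ℕ) (i : ℕ) : ℕ → ℕ := fun j =>
  (slideInto R C ((gromotion R C)^[j - 1] T) i - 1) % (R * C) + 1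

/-! ## Tableaux as lists of rows, Robinson–Schensted insertion -/

/-- Entry of a list-of-rows tableau (0-indexed; `0` outside). -/
def entryL (T : List (List ℕ)) (i j : ℕ) : ℕ := (T.getD i []).getD j 0

/-- Convert a function tableau on an `R × C` rectangle to a list of rows. -/
def toListT (R C : ℕ) (T : ℕ → ℕ → ℕ) : List (List ℕ) :=
  (List.range R).map fun i => (List.range C).map fun j => T i j

/-- Transpose (conjugate) of a list-of-rows tableau. -/
def transposeT (T : List (List ℕ)) : List (List ℕ) :=
  (List.range (T.getD 0 []).length).map fun j => T.filterMap fun row => row[j]?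

/-- Shape (row lengths) of a list-of-rows tableau. -/
def shapeL (T : List (List ℕ)) : List ℕ := T.map List.length

/-- Standard Young tableau, as a list of rows: weakly decreasing nonempty row lengths,
rows and columns strictly increasing, and entries exactly `{1, …, N}` where `N` is the
number of cells. -/
def IsSYTList (T : List (List ℕ)) : Prop :=
  (∀ i, i + 1 < T.length → (T.getD (i + 1) []).length ≤ (T.getD i []).length) ∧
  (∀ row ∈ T, row ≠ []) ∧
  (∀ i j, i < T.length → j + 1 < (T.getD i []).length → entryL T i j < entryL T i (j + 1)) ∧
  (∀ i j, i + 1 < T.length → j < (T.getD (i + 1) []).length →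
    entryL T i j < entryL T (i + 1) j) ∧
  T.flatten.Nodup ∧ (∀ m, m ∈ T.flatten ↔ 1 ≤ m ∧ m ≤ T.flatten.length)

/-- Schensted row insertion of `x` into a tableau. -/
def rowInsert : List (List ℕ) → ℕ → List (List ℕ)
  | [], x => [[x]]
  | r :: rs, x =>
    match r.dropWhile (fun y => decide (y < x)) with
    | [] => (r ++ [x]) :: rs
    | y :: bs => (r.takeWhile (fun y => decide (y < x)) ++ x :: bs) :: rowInsert rs y

/-- The (0-indexed) row where the shape grew when passing from `P` to `P'`. -/
def rowOfNewCell (P P' : List (List ℕ)) : ℕ :=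
  ((List.range P'.length).find? fun i =>
    decide ((P'.getD i []).length ≠ (P.getD i []).length)).getD 0

def placeInRow (Q : List (List ℕ)) (r k : ℕ) : List (List ℕ) :=
  if r < Q.length then Q.set r (Q.getD r [] ++ [k]) else Q ++ [[k]]

/-- The Robinson–Schensted correspondence: the pair (insertion tableau, recording tableau)
of a word. -/
def RS (w : List ℕ) : List (List ℕ) × List (List ℕ) :=
  (List.range w.length).foldl
    (fun PQ i =>
      let P' := rowInsert PQ.1 (w.getD i 0)
      (P', placeInRow PQ.2 (rowOfNewCell PQ.1 P') (i + 1)))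
    ([], [])

/-! ## Jeu de taquin on list tableaux; evacuation -/

def extL (T : List (List ℕ)) (p : ℕ × ℕ) : WithTop ℕ :=
  if p.2 < (T.getD p.1 []).length then ((entryL T p.1 p.2 : ℕ) : WithTop ℕ) else ⊤

def nextCellL (T : List (List ℕ)) (p : ℕ × ℕ) : ℕ × ℕ :=
  if extL T (p.1, p.2 + 1) = ⊤ ∧ extL T (p.1 + 1, p.2) = ⊤ then p
  else if extL T (p.1, p.2 + 1) < extL T (p.1 + 1, p.2) then (p.1, p.2 + 1)
  else (p.1 + 1, p.2)

def jdtPath (T : List (List ℕ)) : ℕ → ℕ × ℕ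
  | 0 => (0, 0)
  | k + 1 => nextCellL T (jdtPath T k)

/-- The outer corner vacated when the minimal entry of `T` is deleted and the tableau is
rectified by jeu de taquin slides. -/
def vacated (T : List (List ℕ)) : ℕ × ℕ := jdtPath T T.flatten.length

/-- The value at cell `(i, j)` after the rectification slide. -/
def slidValue (T : List (List ℕ)) (i j : ℕ) : ℕ :=
  match (List.range T.flatten.length).find? (fun k =>
      decide (jdtPath T k = (i, j) ∧ jdtPath T (k + 1) ≠ (i, j))) with
  | some k => entryL T (jdtPath T (k + 1)).1 (jdtPath T (k + 1)).2
  | none => entryL T i j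

/-- Delete the minimal entry of `T` and rectify. -/
def delta (T : List (List ℕ)) : List (List ℕ) :=
  ((List.range T.length).map fun i =>
    (List.range ((T.getD i []).length - if i = (vacated T).1 then 1 else 0)).map fun j =>
      slidValue T i j).filter fun row => decide (row ≠ [])

/-- The entry of the evacuation `∂T` at cell `(i,j)`: `n + 1 - k` where the `k`-th
deletion-rectification vacates `(i,j)`. -/
def evacEntry (T : List (List ℕ)) (i j : ℕ) : ℕ :=
  match (List.range T.flatten.length).find? (fun k =>
      decide (vacated (delta^[k] T) = (i, j))) with
  | some k => T.flatten.length - k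
  | none => 0

/-- Schützenberger evacuation `∂T` of a standard Young tableau. -/
def evacL (T : List (List ℕ)) : List (List ℕ) :=
  (List.range T.length).map fun i =>
    (List.range (T.getD i []).length).map fun j => evacEntry T i j

/-! ## Shadow lines, skeleta, and Viennot's construction -/

def dirNE (a b : ℤ × ℤ) : Prop := a.1 ≤ b.1 ∧ a.2 ≤ b.2
def dirSE (a b : ℤ × ℤ) : Prop := a.1 ≤ b.1 ∧ b.2 ≤ a.2
def dirSW (a b : ℤ × ℤ) : Prop := b.1 ≤ a.1 ∧ b.2 ≤ a.2
def dirNW (a b : ℤ × ℤ) : Prop := b.1 ≤ a.1 ∧ a.2 ≤ b.2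

def minimalsUnder (d : ℤ × ℤ → ℤ × ℤ → Prop) (P : Set (ℤ × ℤ)) : Set (ℤ × ℤ) :=
  {p ∈ P | ∀ q ∈ P, d q p → q = p}

/-- `P` minus its first `j` shadow lines. -/
def shadowRest (d : ℤ × ℤ → ℤ × ℤ → Prop) (P : Set (ℤ × ℤ)) : ℕ → Set (ℤ × ℤ)
  | 0 => P
  | j + 1 => shadowRest d P j \ minimalsUnder d (shadowRest d P j)

/-- The `j`-th shadow line of `P` (1-indexed `j`). -/
def shadowLine (d : ℤ × ℤ → ℤ × ℤ → Prop) (P : Set (ℤ × ℤ)) (j : ℕ) : Set (ℤ × ℤ) :=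
  minimalsUnder d (shadowRest d P (j - 1))

/-- The skeleton of a single shadow line `L`: the minimal elements of the set of points
covered by the shadows of at least two points of `L`. -/
def lineSkeleton (d : ℤ × ℤ → ℤ × ℤ → Prop) (L : Set (ℤ × ℤ)) : Set (ℤ × ℤ) :=
  minimalsUnder d {x | ∃ p ∈ L, ∃ q ∈ L, p ≠ q ∧ d p x ∧ d q x}

/-- The skeleton of `P`: the union of the skeleta of its shadow lines. -/
def skeleton (d : ℤ × ℤ → ℤ × ℤ → Prop) (P : Set (ℤ × ℤ)) : Set (ℤ × ℤ) :=
  ⋃ j : ℕ, lineSkeleton d (shadowLine d P (j + 1))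

/-- The `k`-th iterated skeleton of `P`. -/
def skeletonIter (d : ℤ × ℤ → ℤ × ℤ → Prop) (P : Set (ℤ × ℤ)) (k : ℕ) : Set (ℤ × ℤ) :=
  (skeleton d)^[k] P

def IsMinSnd (L : Set (ℤ × ℤ)) (y : ℤ) : Prop := (∃ p ∈ L, p.2 = y) ∧ ∀ p ∈ L, y ≤ p.2
def IsMaxSnd (L : Set (ℤ × ℤ)) (y : ℤ) : Prop := (∃ p ∈ L, p.2 = y) ∧ ∀ p ∈ L, p.2 ≤ y
def IsMinFst (L : Set (ℤ × ℤ)) (x : ℤ) : Prop := (∃ p ∈ L, p.1 = x) ∧ ∀ p ∈ L, x ≤ p.1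
def IsMaxFst (L : Set (ℤ × ℤ)) (x : ℤ) : Prop := (∃ p ∈ L, p.1 = x) ∧ ∀ p ∈ L, p.1 ≤ x

/-- The set of exit coordinates (specified by `spec`) of the shadow lines of the `i`-th
iterated skeleton of `P` in direction `d`. -/
def exitSet (spec : Set (ℤ × ℤ) → ℤ → Prop) (d : ℤ × ℤ → ℤ × ℤ → Prop)
    (P : Set (ℤ × ℤ)) (i : ℕ) : Set ℤ :=
  {v | ∃ j : ℕ, spec (shadowLine d (skeletonIter d P i) (j + 1)) v}

/-- The word read off along one edge in Viennot's construction is the lattice word of the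
standard tableau `T`: there is an enumeration `e` of all shadow-line exit coordinates,
in the order prescribed by `lt`, such that the `m`-th exit belongs to a shadow line of the
`i`-th iterated skeleton exactly when the entry `m` of `T` lies in row `i + 1`. -/
def ReadsWord (spec : Set (ℤ × ℤ) → ℤ → Prop) (lt : ℤ → ℤ → Prop)
    (d : ℤ × ℤ → ℤ × ℤ → Prop) (P : Set (ℤ × ℤ)) (T : List (List ℕ)) : Prop :=
  ∃ e : Fin T.flatten.length → ℤ,
    (∀ a b : Fin T.flatten.length, a < b → lt (e a) (e b)) ∧
    (Set.range e = ⋃ i : ℕ, exitSet spec d P i) ∧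
    ∀ (m : Fin T.flatten.length) (i : ℕ), e m ∈ exitSet spec d P i →
      (T.findIdx fun row => row.contains (m.1 + 1)) + 1 = i + 1

/-- `𝒱(𝒫, ↗) = (Pt, Qt)`: the P-word is read bottom-to-top along the right edge
(east exit heights, which are the minimal `y`-coordinates of the lines), the Q-word
left-to-right along the top edge (north exits at minimal `x`-coordinates). -/
def ViennotNE (P : Set (ℤ × ℤ)) (Pt Qt : List (List ℕ)) : Prop :=
  ReadsWord IsMinSnd (· < ·) dirNE P Pt ∧ ReadsWord IsMinFst (· < ·) dirNE P Qt

/-- `𝒱(𝒫, ↘) = (Pt, Qt)`: P-word left-to-right along the bottom edge, Q-word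
top-to-bottom along the right edge. -/
def ViennotSE (P : Set (ℤ × ℤ)) (Pt Qt : List (List ℕ)) : Prop :=
  ReadsWord IsMinFst (· < ·) dirSE P Pt ∧ ReadsWord IsMaxSnd (· > ·) dirSE P Qt

/-- `𝒱(𝒫, ↙) = (Pt, Qt)`: P-word bottom-to-top along the left edge, Q-word
right-to-left along the bottom edge. -/
def ViennotSW (P : Set (ℤ × ℤ)) (Pt Qt : List (List ℕ)) : Prop :=
  ReadsWord IsMaxSnd (· < ·) dirSW P Pt ∧ ReadsWord IsMaxFst (· > ·) dirSW P Qt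

/-- `𝒱(𝒫, ↖) = (Pt, Qt)`: P-word right-to-left along the top edge, Q-word
bottom-to-top along the left edge. -/
def ViennotNW (P : Set (ℤ × ℤ)) (Pt Qt : List (List ℕ)) : Prop :=
  ReadsWord IsMaxFst (· > ·) dirNW P Pt ∧ ReadsWord IsMinSnd (· < ·) dirNW P Qt

/-- The point set `𝒫^NE(ρ)` of the northeast `n × n` block of the permutation matrix of
`ρ ∈ S_{2n}`, in Cartesian coordinates. -/
def pointsNE (n : ℕ) (f : ℕ → ℕ) : Set (ℤ × ℤ) :=
  {p | ∃ x : ℕ, 1 ≤ x ∧ x ≤ n ∧ n < f x ∧ p = ((f x : ℤ) - n, (n : ℤ) + 1 - x)}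

/-! ## Crossings and nestings of perfect matchings -/

/-- The matching `{a, f a}` on `{1, …, N}` has a `k`-crossing:
blocks `{a₁ < b₁}, …, {a_k < b_k}` with `a₁ < ⋯ < a_k < b₁ < ⋯ < b_k`. -/
def HasCrossing (f : ℕ → ℕ) (N k : ℕ) : Prop :=
  ∃ a b : Fin k → ℕ, StrictMono a ∧ StrictMono b ∧
    (∀ m, 1 ≤ a m ∧ b m ≤ N ∧ f (a m) = b m ∧ a m < b m) ∧
    ∀ m m' : Fin k, a m < b m'

/-- The matching `{a, f a}` on `{1, …, N}` has a `k`-nesting: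
blocks `{a₁ < b₁}, …, {a_k < b_k}` with `a₁ < ⋯ < a_k < b_k < ⋯ < b₁`. -/
def HasNesting (f : ℕ → ℕ) (N k : ℕ) : Prop :=
  ∃ a b : Fin k → ℕ, StrictMono a ∧ StrictAnti b ∧
    (∀ m, 1 ≤ a m ∧ b m ≤ N ∧ f (a m) = b m ∧ a m < b m) ∧
    ∀ m m' : Fin k, a m < b m'

/-! ## Local rules, the promotion–evacuation diagram, and the promotion matrix -/

/-- Partitions are encoded as lists of row lengths (fixed length, padded by zeros). -/
def sortDesc (l : List ℕ) : List ℕ := List.insertionSort (· ≥ ·) l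

/-- The sequence `ν + κ - λ` (pointwise). -/
def ruleSeq (lam nu ka : List ℕ) : List ℕ :=
  List.zipWith (fun a b => a - b) (List.zipWith (· + ·) nu ka) lam

/-- The local rule: `μ = sort(ν + κ - λ)`. -/
def localRule (lam nu ka : List ℕ) : List ℕ := sortDesc (ruleSeq lam nu ka)

/-- The decoration of a local rule square: `i` if `ν + κ - λ` fails to be sorted at rows
`i, i+1` (1-indexed), and `0` if no decoration is present. -/
def decoration (lam nu ka : List ℕ) : ℕ :=
  match (List.range (ruleSeq lam nu ka).length).find? (fun i =>
      decide ((ruleSeq lam nu ka).getD i 0 < (ruleSeq lam nu ka).getD (i + 1) 0)) with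
  | some i => i + 1
  | none => 0

/-- Fill in the next row of the promotion–evacuation diagram from the previous row `prev`:
the new row starts with the empty partition at position `s` and continues by local rules. -/
def nextRow (R : ℕ) (prev : ℕ → List ℕ) (s : ℕ) : ℕ → List ℕ
  | 0 => List.replicate R 0
  | x + 1 =>
    if x + 1 ≤ s then List.replicate R 0
    else localRule (prev x) (prev (x + 1)) (nextRow R prev s x)

/-- The `j`-th row of the promotion–evacuation diagram of `T ∈ SYT(R × C)`, as a function
of the column index (row `0` is the chain of `T`). -/
def PErow (R C : ℕ) (T : ℕ → ℕ → ℕ) : ℕ → ℕ → List ℕ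
  | 0 => fun x => (List.range R).map fun i =>
      ((Finset.range C).filter fun j => T i j ≤ min x (R * C)).card
  | j + 1 => nextRow R (PErow R C T j) (j + 1)

/-- For `S = stack(P, Q) ∈ SYT(2r × c)` and `n = r*c`, the `(n+1) × (n+1)` northeast block
of partitions `λ(x, y)` of `PEdiagram(S)` (Cartesian coordinates): `λ(x,y)` is the
diagram entry in row `n - y`, column `n + x`. -/
def lamBlock (r c : ℕ) (S : ℕ → ℕ → ℕ) (x y : ℕ) : List ℕ :=
  PErow (2 * r) c S (r * c - y) (r * c + x)

/-- The entry of `PM(S)^NE` at Cartesian coordinates `(x, y)`, `1 ≤ x, y ≤ n`: the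
decoration of the local rule square with corners `λ(x-1, y-1)`, `λ(x-1, y)`, `λ(x, y-1)`,
`λ(x, y)`. -/
def PMNE (r c : ℕ) (S : ℕ → ℕ → ℕ) (x y : ℕ) : ℕ :=
  decoration (lamBlock r c S (x - 1) y) (lamBlock r c S x y) (lamBlock r c S (x - 1) (y - 1))

/-- Chain of partitions of a list tableau: shape of the entries `≤ m`. -/
def chainOfL (T : List (List ℕ)) (m : ℕ) : List ℕ :=
  T.map fun row => (row.filter fun a => decide (a ≤ m)).length

/-- Column height `#{i : j < l i}` of a partition. -/
def colHeight (l : List ℕ) (j : ℕ) : ℕ := (l.filter fun a => decide (j < a)).length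

/-- Vertical sum `l +' m` of two partitions (stack the columns of `m` onto those of `l`),
computed inside a `rows × cols` bounding box. -/
def vsum (rows cols : ℕ) (l m : List ℕ) : List ℕ :=
  (List.range rows).map fun i =>
    ((List.range cols).filter fun j => decide (i < colHeight l j + colHeight m j)).length

/-! ## The point sets `S_k` and `S_{kj}` -/

/-- `x_{sj}`: the entry of `Q` in row `s`, column `j` (1-indexed). -/
def xEnt (Q : ℕ → ℕ → ℕ) (s j : ℕ) : ℤ := (Q (s - 1) (j - 1) : ℤ)

/-- `y_{tj}`: the entry of `∂(P)` in row `t`, column `j` (1-indexed). -/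
def yEnt (r c : ℕ) (P : ℕ → ℕ → ℕ) (t j : ℕ) : ℤ :=
  (entryL (evacL (toListT r c P)) (t - 1) (j - 1) : ℤ)

def Skj (r c : ℕ) (P Q : ℕ → ℕ → ℕ) (k j : ℕ) : Set (ℤ × ℤ) :=
  {p | ∃ s t : ℕ, 1 ≤ s ∧ s ≤ r ∧ 1 ≤ t ∧ t ≤ r ∧ s + t - 1 = k ∧
    p = (xEnt Q s j, yEnt r c P t j)}

def Sk (r c : ℕ) (P Q : ℕ → ℕ → ℕ) (k : ℕ) : Set (ℤ × ℤ) :=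
  ⋃ j ∈ Set.Icc 1 c, Skj r c P Q k j

/-- A southeast chain of `k` ones in the matrix `U` (rows increase, columns increase),
contained in a rectangle that fully fits into the strictly upper triangular part of the
`N × N` matrix. -/
def HasSEChain (U : ℕ → ℕ → ℕ) (N k : ℕ) : Prop :=
  ∃ a b : Fin k → ℕ, StrictMono a ∧ StrictMono b ∧ (∀ m, U (a m) (b m) = 1) ∧
    ∃ r₁ r₂ c₁ c₂ : ℕ, 1 ≤ r₁ ∧ r₂ < c₁ ∧ c₂ ≤ N ∧
      ∀ m, r₁ ≤ a m ∧ a m ≤ r₂ ∧ c₁ ≤ b m ∧ b m ≤ c₂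

/-- A southwest chain of `k` ones in the matrix `U` (rows increase, columns decrease),
contained in a rectangle that fully fits into the strictly upper triangular part of the
`N × N` matrix. -/
def HasSWChain (U : ℕ → ℕ → ℕ) (N k : ℕ) : Prop :=
  ∃ a b : Fin k → ℕ, StrictMono a ∧ StrictAnti b ∧ (∀ m, U (a m) (b m) = 1) ∧
    ∃ r₁ r₂ c₁ c₂ : ℕ, 1 ≤ r₁ ∧ r₂ < c₁ ∧ c₂ ≤ N ∧
      ∀ m, r₁ ≤ a m ∧ a m ≤ r₂ ∧ c₁ ≤ b m ∧ b m ≤ c₂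


/-! Fix the column `j`. The entries `x_s = x_{sj}` and `y_t = y_{tj}` increase with `s` and `t`:
for `Q` because it is standard, for `∂(P)` because evacuation vacates a cell only after the cell
below it. So `S_{kj}` is the antidiagonal `s + t = k + 1` of the grid `(x_s, y_t)`. A point in
the `↗`-shadows of two distinct points `(x_s, y_t)`, `(x_{s'}, y_{t'})` with `s < s'` lies in the
shadow of `(x_{s'}, y_{t'+1}) ∈ S_{k+1,j}`, which is itself in the shadows of
`(x_{s'-1}, y_{t'+1})` and `(x_{s'}, y_{t'})`. For `k ≥ r` every point of `S_{k+1,j}` arises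
this way, and `S_{k+1,j}` is an antichain, so it is the set of minimal such points. The `↙` case
is the mirror image.
-/

instance : IsTrans (ℤ × ℤ) dirNE := ⟨fun _ _ _ h₁ h₂ => ⟨h₁.1.trans h₂.1, h₁.2.trans h₂.2⟩⟩

instance : Std.Antisymm dirNE :=
  ⟨fun _ _ h₁ h₂ => Prod.ext (le_antisymm h₁.1 h₂.1) (le_antisymm h₁.2 h₂.2)⟩

instance : IsTrans (ℤ × ℤ) dirSW := ⟨fun _ _ _ h₁ h₂ => ⟨h₂.1.trans h₁.1, h₂.2.trans h₁.2⟩⟩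

instance : Std.Antisymm dirSW :=
  ⟨fun _ _ h₁ h₂ => Prod.ext (le_antisymm h₂.1 h₁.1) (le_antisymm h₂.2 h₁.2)⟩

lemma minimalsUnder_eq_of_forall_exists {d : ℤ × ℤ → ℤ × ℤ → Prop} [IsTrans _ d]
    [Std.Antisymm d] {A C : Set (ℤ × ℤ)} (hAC : A ⊆ C) (hA : ∀ a ∈ A, ∀ b ∈ A, d a b → a = b)
    (hC : ∀ c ∈ C, ∃ a ∈ A, d a c) :
    minimalsUnder d C = A := by
  ext x
  constructor
  · rintro ⟨hxC, hmin⟩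
    obtain ⟨a, ha, hax⟩ := hC x hxC
    rwa [← hmin a (hAC ha) hax]
  · intro hxA
    refine ⟨hAC hxA, fun y hyC hyx => ?_⟩
    obtain ⟨a, ha, hay⟩ := hC y hyC
    obtain rfl : a = x := hA a ha x hxA (_root_.trans hay hyx)
    exact antisymm hyx hay

def shadowOverlap (d : ℤ × ℤ → ℤ × ℤ → Prop) (L : Set (ℤ × ℤ)) : Set (ℤ × ℤ) :=
  {x | ∃ p ∈ L, ∃ q ∈ L, p ≠ q ∧ d p x ∧ d q x}

/-- `Skj r c P Q k j` is `diagPoints (xEnt Q · j) (yEnt r c P · j) r k` by definition. -/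
def diagPoints (X Y : ℕ → ℤ) (r k : ℕ) : Set (ℤ × ℤ) :=
  {p | ∃ s t : ℕ, 1 ≤ s ∧ s ≤ r ∧ 1 ≤ t ∧ t ≤ r ∧ s + t - 1 = k ∧ p = (X s, Y t)}

section diagPoints

variable {X Y : ℕ → ℤ} {r k : ℕ}

lemma exists_of_mem_shadowOverlap_diagPoints {d : ℤ × ℤ → ℤ × ℤ → Prop} {q : ℤ × ℤ}
    (hq : q ∈ shadowOverlap d (diagPoints X Y r k)) :
    ∃ s₁ t₁ s₂ t₂ : ℕ, 1 ≤ s₁ ∧ s₁ < s₂ ∧ s₂ ≤ r ∧ 1 ≤ t₂ ∧ t₁ ≤ r ∧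
      s₁ + t₁ = k + 1 ∧ s₂ + t₂ = k + 1 ∧ d (X s₁, Y t₁) q ∧ d (X s₂, Y t₂) q := by
  obtain ⟨_, ⟨s₁, t₁, hs₁, hs₁r, ht₁, ht₁r, hk₁, rfl⟩, _, ⟨s₂, t₂, hs₂, hs₂r, ht₂, ht₂r, hk₂, rfl⟩,
    hne, h₁, h₂⟩ := hq
  rcases lt_trichotomy s₁ s₂ with h | rfl | h
  · exact ⟨s₁, t₁, s₂, t₂, hs₁, h, hs₂r, ht₂, ht₁r, by omega, by omega, h₁, h₂⟩
  · exact absurd (by rw [show t₁ = t₂ by omega]) hne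
  · exact ⟨s₂, t₂, s₁, t₁, hs₂, h, hs₁r, ht₁, ht₂r, by omega, by omega, h₂, h₁⟩

lemma diagPoints_eq_of_dirNE (hX : StrictMonoOn X (Set.Icc 1 r))
    (hY : StrictMonoOn Y (Set.Icc 1 r)) {a b : ℤ × ℤ} (ha : a ∈ diagPoints X Y r k)
    (hb : b ∈ diagPoints X Y r k) (hab : dirNE a b) : a = b := by
  obtain ⟨s, t, hs, hsr, ht, htr, hk, rfl⟩ := ha
  obtain ⟨s', t', hs', hs'r, ht', ht'r, hk', rfl⟩ := hb
  have hss' : s ≤ s' := (hX.le_iff_le ⟨hs, hsr⟩ ⟨hs', hs'r⟩).1 hab.1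
  have htt' : t ≤ t' := (hY.le_iff_le ⟨ht, htr⟩ ⟨ht', ht'r⟩).1 hab.2
  obtain ⟨rfl, rfl⟩ : s = s' ∧ t = t' := by omega
  rfl

lemma diagPoints_succ_subset_shadowOverlap (hX : StrictMonoOn X (Set.Icc 1 r))
    (hY : StrictMonoOn Y (Set.Icc 1 r)) (hk : r ≤ k) :
    diagPoints X Y r (k + 1) ⊆ shadowOverlap dirNE (diagPoints X Y r k) := by
  rintro _ ⟨s, t, hs, hsr, ht, htr, hk', rfl⟩
  have hXs : X (s - 1) < X s := hX ⟨by omega, by omega⟩ ⟨hs, hsr⟩ (by omega)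
  have hYt : Y (t - 1) < Y t := hY ⟨by omega, by omega⟩ ⟨ht, htr⟩ (by omega)
  exact ⟨_, ⟨s - 1, t, by omega, by omega, ht, htr, by omega, rfl⟩,
    _, ⟨s, t - 1, hs, hsr, by omega, by omega, by omega, rfl⟩,
    fun h => hXs.ne (congrArg Prod.fst h), ⟨hXs.le, le_rfl⟩, ⟨le_rfl, hYt.le⟩⟩

lemma exists_diagPoints_succ_dirNE (hY : StrictMonoOn Y (Set.Icc 1 r)) {q : ℤ × ℤ}
    (hq : q ∈ shadowOverlap dirNE (diagPoints X Y r k)) :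
    ∃ a ∈ diagPoints X Y r (k + 1), dirNE a q := by
  obtain ⟨s₁, t₁, s₂, t₂, hs₁, hs, hs₂r, ht₂, ht₁r, hk₁, hk₂, h₁, h₂⟩ :=
    exists_of_mem_shadowOverlap_diagPoints hq
  have hYt : Y (t₂ + 1) ≤ Y t₁ :=
    (hY.le_iff_le ⟨by omega, by omega⟩ ⟨by omega, ht₁r⟩).2 (by omega)
  exact ⟨_, ⟨s₂, t₂ + 1, by omega, hs₂r, by omega, by omega, by omega, rfl⟩, h₂.1, hYt.trans h₁.2⟩

theorem lineSkeleton_diagPoints_dirNE (hX : StrictMonoOn X (Set.Icc 1 r))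
    (hY : StrictMonoOn Y (Set.Icc 1 r)) (hk : r ≤ k) :
    lineSkeleton dirNE (diagPoints X Y r k) = diagPoints X Y r (k + 1) :=
  minimalsUnder_eq_of_forall_exists (diagPoints_succ_subset_shadowOverlap hX hY hk)
    (fun _ ha _ hb => diagPoints_eq_of_dirNE hX hY ha hb)
    (fun _ hq => exists_diagPoints_succ_dirNE hY hq)

lemma diagPoints_pred_subset_shadowOverlap (hX : StrictMonoOn X (Set.Icc 1 r))
    (hY : StrictMonoOn Y (Set.Icc 1 r)) (hk : k ≤ r) :
    diagPoints X Y r (k - 1) ⊆ shadowOverlap dirSW (diagPoints X Y r k) := by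
  rintro _ ⟨s, t, hs, hsr, ht, htr, hk', rfl⟩
  have hXs : X s < X (s + 1) := hX ⟨hs, hsr⟩ ⟨by omega, by omega⟩ (by omega)
  have hYt : Y t < Y (t + 1) := hY ⟨ht, htr⟩ ⟨by omega, by omega⟩ (by omega)
  exact ⟨_, ⟨s + 1, t, by omega, by omega, ht, htr, by omega, rfl⟩,
    _, ⟨s, t + 1, hs, hsr, by omega, by omega, by omega, rfl⟩,
    fun h => hXs.ne' (congrArg Prod.fst h), ⟨hXs.le, le_rfl⟩, ⟨le_rfl, hYt.le⟩⟩

lemma exists_diagPoints_pred_dirSW (hY : StrictMonoOn Y (Set.Icc 1 r)) {q : ℤ × ℤ}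
    (hq : q ∈ shadowOverlap dirSW (diagPoints X Y r k)) :
    ∃ a ∈ diagPoints X Y r (k - 1), dirSW a q := by
  obtain ⟨s₁, t₁, s₂, t₂, hs₁, hs, hs₂r, ht₂, ht₁r, hk₁, hk₂, h₁, h₂⟩ :=
    exists_of_mem_shadowOverlap_diagPoints hq
  have hYt : Y t₂ ≤ Y (t₁ - 1) :=
    (hY.le_iff_le ⟨ht₂, by omega⟩ ⟨by omega, by omega⟩).2 (by omega)
  exact ⟨_, ⟨s₁, t₁ - 1, hs₁, by omega, by omega, by omega, by omega, rfl⟩, h₁.1, h₂.2.trans hYt⟩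

theorem lineSkeleton_diagPoints_dirSW (hX : StrictMonoOn X (Set.Icc 1 r))
    (hY : StrictMonoOn Y (Set.Icc 1 r)) (hk : k ≤ r) :
    lineSkeleton dirSW (diagPoints X Y r k) = diagPoints X Y r (k - 1) :=
  minimalsUnder_eq_of_forall_exists (diagPoints_pred_subset_shadowOverlap hX hY hk)
    (fun _ ha _ hb hab => (diagPoints_eq_of_dirNE hX hY hb ha hab).symm)
    (fun _ hq => exists_diagPoints_pred_dirSW hY hq)

end diagPoints


lemma getD_map_range {α : Type*} (f : ℕ → α) {n i : ℕ} (hi : i < n) (d : α) :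
    ((List.range n).map f).getD i d = f i := by
  simp [List.getD_eq_getElem?_getD, hi]

lemma getD_filter_ne_nil {l : List (List ℕ)} (hl : Antitone fun i => (l.getD i []).length)
    (i : ℕ) : (l.filter fun row => decide (row ≠ [])).getD i [] = l.getD i [] := by
  induction l generalizing i with
  | nil => simp
  | cons a l ih =>
    by_cases ha : a = []
    · have hnil : ∀ i, (a :: l).getD i [] = [] := fun i =>
        List.eq_nil_of_length_eq_zero (Nat.le_zero.1 (by simpa [ha] using hl (Nat.zero_le i)))
      have hl' : ∀ row ∈ l, row = [] := fun row hrow => by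
        obtain ⟨m, hm, rfl⟩ := List.getElem_of_mem hrow
        simpa [hm] using hnil (m + 1)
      rw [hnil, List.filter_cons_of_neg (by simp [ha]),
        List.filter_eq_nil_iff.2 (by simpa using hl')]
      simp
    · rw [List.filter_cons_of_pos (by simpa using ha)]
      cases i with
      | zero => rfl
      | succ i => exact ih (fun _ _ h => hl (Nat.succ_le_succ h)) i

def rowLen (T : List (List ℕ)) (i : ℕ) : ℕ := (T.getD i []).length

def InShape (T : List (List ℕ)) (p : ℕ × ℕ) : Prop := p.2 < rowLen T p.1

def IsShape (T : List (List ℕ)) : Prop := Antitone (rowLen T) ∧ [] ∉ T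

def IsOuterCorner (T : List (List ℕ)) (p : ℕ × ℕ) : Prop :=
  ¬ InShape T (p.1, p.2 + 1) ∧ ¬ InShape T (p.1 + 1, p.2)

section Evacuation

variable {T : List (List ℕ)}

lemma rowLen_eq_zero {i : ℕ} (h : T.length ≤ i) : rowLen T i = 0 := by
  unfold rowLen
  rw [List.getD_eq_default _ _ h, List.length_nil]

lemma InShape.lt_length {p : ℕ × ℕ} (h : InShape T p) : p.1 < T.length := by
  by_contra hc
  have := rowLen_eq_zero (not_lt.1 hc)
  unfold InShape at h
  omega

lemma InShape.ne_nil {p : ℕ × ℕ} (h : InShape T p) : T ≠ [] :=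
  List.ne_nil_of_length_pos (Nat.zero_lt_of_lt h.lt_length)

lemma IsShape.one_le_rowLen (hT : IsShape T) {i : ℕ} (hi : i < T.length) :
    1 ≤ rowLen T i := by
  refine List.length_pos_iff.2 fun h => hT.2 ?_
  rw [← h, List.getD_eq_getElem _ _ hi]
  exact List.getElem_mem hi

lemma add_lt_length_flatten (hT : [] ∉ T) {i j : ℕ} (h : InShape T (i, j)) :
    i + j < T.flatten.length := by
  induction T generalizing i with
  | nil => exact absurd h.lt_length (Nat.not_lt_zero _)
  | cons a T ih =>
    rw [List.flatten_cons, List.length_append]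
    cases i with
    | zero =>
      have : j < a.length := h
      omega
    | succ i =>
      have ha : 0 < a.length := List.length_pos_iff.2 fun h => hT (h ▸ List.mem_cons_self)
      have := ih (fun h => hT (List.mem_cons_of_mem _ h)) (i := i) h
      omega

lemma length_flatten_eq_sum_rowLen :
    ∀ {T : List (List ℕ)} {n : ℕ}, T.length ≤ n →
      T.flatten.length = ∑ i ∈ Finset.range n, rowLen T i
  | [], _, _ => by simp [rowLen]
  | a :: T, n + 1, h => by
    rw [Finset.sum_range_succ', List.flatten_cons, List.length_append,
      length_flatten_eq_sum_rowLen (T := T) (by simpa using h), add_comm]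
    rfl

lemma extL_eq_top_iff {p : ℕ × ℕ} : extL T p = ⊤ ↔ ¬ InShape T p := by
  unfold extL InShape rowLen
  split_ifs with h
  · exact iff_of_false WithTop.coe_ne_top (not_not_intro h)
  · exact iff_of_true rfl h

lemma nextCellL_of_isOuterCorner {p : ℕ × ℕ} (h : IsOuterCorner T p) : nextCellL T p = p := by
  unfold nextCellL
  rw [if_pos ⟨extL_eq_top_iff.2 h.1, extL_eq_top_iff.2 h.2⟩]

lemma nextCellL_cases (p : ℕ × ℕ) :
    (nextCellL T p = p ∧ IsOuterCorner T p) ∨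
      (InShape T (nextCellL T p) ∧ (nextCellL T p).1 + (nextCellL T p).2 = p.1 + p.2 + 1) := by
  unfold nextCellL
  split_ifs with hstop hlt
  · exact Or.inl ⟨rfl, extL_eq_top_iff.1 hstop.1, extL_eq_top_iff.1 hstop.2⟩
  · exact Or.inr ⟨extL_eq_top_iff.not_left.1 hlt.ne_top, by simp only; omega⟩
  · refine Or.inr ⟨extL_eq_top_iff.not_left.1 fun htop => hstop ⟨?_, htop⟩, by simp only; omega⟩
    by_contra hne
    exact hlt (htop ▸ WithTop.lt_top_iff_ne_top.2 hne)

lemma inShape_jdtPath (hT : IsShape T) (hne : T ≠ []) (k : ℕ) : InShape T (jdtPath T k) := by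
  induction k with
  | zero => exact hT.one_le_rowLen (List.length_pos_iff.2 hne)
  | succ k ih =>
    rcases nextCellL_cases (T := T) (jdtPath T k) with ⟨heq, _⟩ | ⟨hin, _⟩
    · exact (congrArg (InShape T) heq).mpr ih
    · exact hin

lemma isOuterCorner_jdtPath_or_le (k : ℕ) :
    IsOuterCorner T (jdtPath T k) ∨ k ≤ (jdtPath T k).1 + (jdtPath T k).2 := by
  induction k with
  | zero => exact Or.inr (Nat.zero_le _)
  | succ k ih =>
    rw [jdtPath]
    rcases nextCellL_cases (T := T) (jdtPath T k) with ⟨heq, hcorner⟩ | ⟨_, hsum⟩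
    · rw [heq]
      exact Or.inl hcorner
    · rcases ih with hcorner | hle
      · rw [nextCellL_of_isOuterCorner hcorner]
        exact Or.inl hcorner
      · exact Or.inr (by omega)

/-- The path reaches an outer corner within `|T|` steps, since every cell `(i, j)` of the shape
has `i + j < |T|`. -/
lemma vacated_spec (hT : IsShape T) (hne : T ≠ []) :
    InShape T (vacated T) ∧ IsOuterCorner T (vacated T) := by
  have hin := inShape_jdtPath hT hne T.flatten.length
  refine ⟨hin, (isOuterCorner_jdtPath_or_le _).resolve_right fun hle => ?_⟩
  have := add_lt_length_flatten hT.2 hin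
  omega

lemma rowLen_vacated (hT : IsShape T) (hne : T ≠ []) :
    rowLen T (vacated T).1 = (vacated T).2 + 1 ∧ rowLen T ((vacated T).1 + 1) ≤ (vacated T).2 := by
  obtain ⟨hin, hcorner₁, hcorner₂⟩ := vacated_spec hT hne
  dsimp only [InShape] at hin hcorner₁ hcorner₂
  exact ⟨by omega, by omega⟩

lemma antitone_rowLen_sub_vacated (hT : IsShape T) (hne : T ≠ []) :
    Antitone fun i => rowLen T i - if i = (vacated T).1 then 1 else 0 := by
  obtain ⟨hrow, hbelow⟩ := rowLen_vacated hT hne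
  refine antitone_nat_of_succ_le fun i => ?_
  have hmono : rowLen T (i + 1) ≤ rowLen T i := hT.1 (Nat.le_add_right i 1)
  split_ifs with h₁ h₂ h₂ <;> subst_vars <;> omega

lemma rowLen_delta (hT : IsShape T) (hne : T ≠ []) (i : ℕ) :
    rowLen (delta T) i = rowLen T i - if i = (vacated T).1 then 1 else 0 := by
  set f : ℕ → ℕ := fun i => rowLen T i - if i = (vacated T).1 then 1 else 0
  set L := (List.range T.length).map fun i => (List.range (f i)).map fun j => slidValue T i j
  have hdelta : delta T = L.filter fun row => decide (row ≠ []) := rfl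
  have hlen : (fun i => (L.getD i []).length) = f := by
    funext i
    by_cases hi : i < T.length
    · rw [getD_map_range _ hi, List.length_map, List.length_range]
    · rw [List.getD_eq_default _ _ (by simpa [L] using hi)]
      simp [f, rowLen_eq_zero (not_lt.1 hi)]
  have hanti : Antitone fun i => (L.getD i []).length :=
    hlen ▸ antitone_rowLen_sub_vacated hT hne
  rw [rowLen, hdelta, getD_filter_ne_nil hanti]
  exact congrFun hlen i

lemma isShape_delta (hT : IsShape T) (hne : T ≠ []) : IsShape (delta T) := by
  refine ⟨?_, fun hmem => ?_⟩
  · simpa only [funext (rowLen_delta hT hne)] using antitone_rowLen_sub_vacated hT hne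
  · exact absurd rfl (of_decide_eq_true (List.mem_filter.1 hmem).2)

lemma length_flatten_delta (hT : IsShape T) (hne : T ≠ []) :
    (delta T).flatten.length + 1 = T.flatten.length := by
  obtain ⟨hrow, -⟩ := rowLen_vacated hT hne
  have hpos := add_lt_length_flatten hT.2 (vacated_spec hT hne).1
  have hvlen := (vacated_spec hT hne).1.lt_length
  have hdlen : (delta T).length ≤ T.length :=
    (List.length_filter_le _ _).trans (by simp)
  have hle : ∀ i ∈ Finset.range T.length, (if i = (vacated T).1 then 1 else 0) ≤ rowLen T i := by
    intro i _
    split_ifs with h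
    · rw [h, hrow]
      exact Nat.le_add_left 1 _
    · exact Nat.zero_le _
  rw [length_flatten_eq_sum_rowLen hdlen, length_flatten_eq_sum_rowLen le_rfl]
  simp only [rowLen_delta hT hne]
  rw [Finset.sum_tsub_distrib _ hle, Finset.sum_ite_eq' _ _ (fun _ => 1),
    if_pos (Finset.mem_range.2 hvlen), ← length_flatten_eq_sum_rowLen le_rfl]
  omega

lemma inShape_delta (hT : IsShape T) (hne : T ≠ []) {p : ℕ × ℕ} :
    InShape (delta T) p ↔ InShape T p ∧ p ≠ vacated T := by
  obtain ⟨hrow, -⟩ := rowLen_vacated hT hne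
  obtain ⟨i, j⟩ := p
  unfold InShape
  rw [rowLen_delta hT hne]
  by_cases h : i = (vacated T).1
  · subst h
    rw [if_pos rfl, hrow, Ne, Prod.ext_iff]
    simp only [true_and]
    omega
  · rw [if_neg h, Nat.sub_zero]
    exact ⟨fun hj => ⟨hj, fun he => h (congrArg Prod.fst he)⟩, And.left⟩

lemma exists_vacated_iterate_eq {p : ℕ × ℕ} :
    ∀ {n : ℕ} {T : List (List ℕ)}, T.flatten.length = n → IsShape T → InShape T p →
      ∃ k < n, vacated (delta^[k] T) = p := by
  intro n
  induction n with
  | zero =>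
    intro T hn hT hp
    have := add_lt_length_flatten hT.2 hp
    omega
  | succ n ih =>
    intro T hn hT hp
    by_cases hv : vacated T = p
    · exact ⟨0, Nat.succ_pos n, hv⟩
    have hne := hp.ne_nil
    obtain ⟨k, hk, hvk⟩ := ih (by have := length_flatten_delta hT hne; omega)
      (isShape_delta hT hne) ((inShape_delta hT hne).2 ⟨hp, Ne.symm hv⟩)
    exact ⟨k + 1, Nat.succ_lt_succ hk, hvk⟩

/-- While the cell below is present, `(i, j)` is not an outer corner and cannot be vacated. -/
lemma exists_lt_vacated_iterate_eq_below {i j : ℕ} :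
    ∀ {k : ℕ} {T : List (List ℕ)}, IsShape T → InShape T (i + 1, j) →
      vacated (delta^[k] T) = (i, j) → ∃ k' < k, vacated (delta^[k'] T) = (i + 1, j) := by
  intro k
  induction k with
  | zero =>
    intro T hT hbelow hv
    have hcorner := (vacated_spec hT hbelow.ne_nil).2
    rw [show vacated T = (i, j) from hv] at hcorner
    exact absurd hbelow hcorner.2
  | succ k ih =>
    intro T hT hbelow hv
    by_cases hv₀ : vacated T = (i + 1, j)
    · exact ⟨0, Nat.succ_pos k, hv₀⟩
    have hne := hbelow.ne_nil
    obtain ⟨k', hk', hvk'⟩ := ih (isShape_delta hT hne)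
      ((inShape_delta hT hne).2 ⟨hbelow, Ne.symm hv₀⟩) hv
    exact ⟨k' + 1, Nat.succ_lt_succ hk', hvk'⟩

lemma evacEntry_eq {p : ℕ × ℕ} {k : ℕ} (hk : k < T.flatten.length)
    (hv : vacated (delta^[k] T) = p) (hmin : ∀ m < k, vacated (delta^[m] T) ≠ p) :
    evacEntry T p.1 p.2 = T.flatten.length - k := by
  unfold evacEntry
  rw [(List.find?_range_eq_some).2 ⟨by simpa using hv, List.mem_range.2 hk, by simpa using hmin⟩]

theorem evacEntry_lt_evacEntry_succ (hT : IsShape T) {i j : ℕ} (hbelow : InShape T (i + 1, j)) :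
    evacEntry T i j < evacEntry T (i + 1) j := by
  have hcell : InShape T (i, j) := lt_of_lt_of_le hbelow (hT.1 (Nat.le_succ i))
  have hex : ∀ p, InShape T p → ∃ k, vacated (delta^[k] T) = p := fun p hp =>
    (exists_vacated_iterate_eq rfl hT hp).imp fun _ h => h.2
  have hlt : ∀ p (hp : InShape T p), Nat.find (hex p hp) < T.flatten.length := fun p hp =>
    let ⟨_, hk, hv⟩ := exists_vacated_iterate_eq rfl hT hp
    (Nat.find_min' _ hv).trans_lt hk
  obtain ⟨k', hk', hv'⟩ :=
    exists_lt_vacated_iterate_eq_below hT hbelow (Nat.find_spec (hex _ hcell))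
  have hle : Nat.find (hex _ hbelow) ≤ k' := Nat.find_min' _ hv'
  rw [evacEntry_eq (p := (i, j)) (hlt _ hcell) (Nat.find_spec (hex _ hcell))
      fun m => Nat.find_min (hex _ hcell),
    evacEntry_eq (p := (i + 1, j)) (hlt _ hbelow) (Nat.find_spec (hex _ hbelow))
      fun m => Nat.find_min (hex _ hbelow)]
  have := hlt _ hcell
  omega

end Evacuation

section RectangularTableau

variable {R C : ℕ} {T : ℕ → ℕ → ℕ}

lemma length_toListT : (toListT R C T).length = R := by
  simp [toListT]

lemma rowLen_toListT (i : ℕ) : rowLen (toListT R C T) i = if i < R then C else 0 := by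
  split_ifs with hi
  · rw [rowLen, toListT, getD_map_range _ hi, List.length_map, List.length_range]
  · exact rowLen_eq_zero (by simpa [length_toListT] using hi)

lemma isShape_toListT (hC : 0 < C) : IsShape (toListT R C T) := by
  refine ⟨antitone_nat_of_succ_le fun i => ?_, fun hmem => ?_⟩
  · simp only [rowLen_toListT]
    split_ifs <;> omega
  · obtain ⟨i, -, hi⟩ := List.mem_map.1 hmem
    have := congrArg List.length hi
    simp only [List.length_map, List.length_range, List.length_nil] at this
    omega

lemma entryL_evacL_toListT {a b : ℕ} (ha : a < R) (hb : b < C) :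
    entryL (evacL (toListT R C T)) a b = evacEntry (toListT R C T) a b := by
  have hb' : b < rowLen (toListT R C T) a := by simpa [rowLen_toListT, ha] using hb
  unfold entryL evacL
  rw [getD_map_range _ (length_toListT.symm ▸ ha)]
  exact getD_map_range _ hb' 0

end RectangularTableau

lemma strictMonoOn_yEnt {r c j : ℕ} (P : ℕ → ℕ → ℕ) (hj1 : 1 ≤ j) (hjc : j ≤ c) :
    StrictMonoOn (fun t => yEnt r c P t j) (Set.Icc 1 r) := by
  refine strictMonoOn_of_lt_add_one Set.ordConnected_Icc fun t _ ⟨ht, _⟩ ⟨_, ht'⟩ => ?_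
  have hbelow : InShape (toListT r c P) (t - 1 + 1, j - 1) := by
    simp only [InShape, rowLen_toListT, if_pos (show t - 1 + 1 < r by omega)]
    omega
  have key := evacEntry_lt_evacEntry_succ (isShape_toListT (by omega)) hbelow
  rw [← entryL_evacL_toListT (a := t - 1) (by omega) (by omega),
    ← entryL_evacL_toListT (a := t - 1 + 1) (by omega) (by omega)] at key
  unfold yEnt
  rw [show t + 1 - 1 = t - 1 + 1 by omega]
  exact_mod_cast key

lemma strictMonoOn_xEnt {r c j : ℕ} {Q : ℕ → ℕ → ℕ} (hQ : IsSYT r c Q) (hj1 : 1 ≤ j)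
    (hjc : j ≤ c) : StrictMonoOn (fun s => xEnt Q s j) (Set.Icc 1 r) := by
  refine strictMonoOn_of_lt_add_one Set.ordConnected_Icc fun s _ ⟨hs, _⟩ ⟨_, hs'⟩ => ?_
  unfold xEnt
  rw [show s + 1 - 1 = s - 1 + 1 by omega]
  exact_mod_cast hQ.2.1 (s - 1) (j - 1) (by omega) (by omega)

theorem lineSkeleton_Skj_general (r c : ℕ) (P Q : ℕ → ℕ → ℕ)
    (hQ : IsSYT r c Q) (k j : ℕ) (hj1 : 1 ≤ j) (hjc : j ≤ c) :
    (r ≤ k → k ≤ 2 * r - 1 →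
      lineSkeleton dirNE (Skj r c P Q k j) = Skj r c P Q (k + 1) j) ∧
    (1 ≤ k → k ≤ r →
      lineSkeleton dirSW (Skj r c P Q k j) = Skj r c P Q (k - 1) j) := by
  have hX := strictMonoOn_xEnt hQ hj1 hjc
  have hY := strictMonoOn_yEnt (r := r) P hj1 hjc
  exact ⟨fun hk _ => lineSkeleton_diagPoints_dirNE hX hY hk,
    fun _ hk => lineSkeleton_diagPoints_dirSW hX hY hk⟩

/-- For `P, Q ∈ SYT(r × c)` and the point sets `S_{kj}` built from
entries of `Q` and `∂(P)` (with `S_{0,j} = S_{2r,j} = ∅`): for each `1 ≤ j ≤ c`, if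
`r ≤ k ≤ 2r - 1` then `𝒮(S_{kj}, ↗) = S_{k+1,j}`, and if `1 ≤ k ≤ r` then
`𝒮(S_{kj}, ↙) = S_{k-1,j}`. -/
theorem lineSkeleton_Skj (r c : ℕ) (P Q : ℕ → ℕ → ℕ)
    (hP : IsSYT r c P) (hQ : IsSYT r c Q) (k j : ℕ) (hj1 : 1 ≤ j) (hjc : j ≤ c) :
    (r ≤ k → k ≤ 2 * r - 1 →
      lineSkeleton dirNE (Skj r c P Q k j) = Skj r c P Q (k + 1) j) ∧
    (1 ≤ k → k ≤ r →
      lineSkeleton dirSW (Skj r c P Q k j) = Skj r c P Q (k - 1) j) :=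
  lineSkeleton_Skj_general r c P Q hQ k j hj1 hjc

end PromRS
end

section
/- Let ρ ∈ S_{2n} be a fixed-point-free involution each of whose 2-cycles (a b) has a ∈ {1,…,n} and b ∈ {n+1,…,2n}, and let ρ^NE ∈ S_n be defined by ρ^NE(i) = ρ(i) − n for 1 ≤ i ≤ n. Then the crossing number of ρ (as a perfect matching on [2n]) equals the length of the longest increasing subsequence of the word ρ^NE(1), …, ρ^NE(n), and the nesting number of ρ equals the length of its longest decreasing subsequence; equivalently, the crossing number equals the number of columns and the nesting number equals the number of rows of the common shape of RS(ρ^NE). -/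
namespace PromRS

/-! ## Auxiliary development: Schensted's theorem for `rowInsert` -/

section Schensted

open List

/-- `w` has a subsequence of length `k` that is a chain for `R`. -/
def Subseq (R : ℕ → ℕ → Prop) (w : List ℕ) (k : ℕ) : Prop :=
  ∃ l : List ℕ, l.Sublist w ∧ l.Pairwise R ∧ l.length = k

/-- The insertion tableau. -/
def Pins (w : List ℕ) : List (List ℕ) := w.foldl rowInsert []

/-- Reading word: rows bottom to top. -/
def readT (T : List (List ℕ)) : List ℕ := T.reverse.flatten

/-- Minimal tableau property needed. -/
def IsTab (T : List (List ℕ)) : Prop :=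
  (∀ r ∈ T, r ≠ []) ∧ (∀ r ∈ T, r.Pairwise (· < ·)) ∧
  (∀ i, (T.getD (i+1) []).length ≤ (T.getD i []).length) ∧
  (∀ i j, j < (T.getD (i+1) []).length → (T.getD i []).getD j 0 < (T.getD (i+1) []).getD j 0)

/-- Elementary Knuth transformations. -/
inductive KStep : List ℕ → List ℕ → Prop
  | kA (u v : List ℕ) {x y z : ℕ} (h1 : x < y) (h2 : y < z) :
      KStep (u ++ x :: z :: y :: v) (u ++ z :: x :: y :: v)
  | kB (u v : List ℕ) {x y z : ℕ} (h1 : x < y) (h2 : y < z) :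
      KStep (u ++ y :: x :: z :: v) (u ++ y :: z :: x :: v)

/-- Knuth equivalence. -/
def Keq : List ℕ → List ℕ → Prop :=
  Relation.ReflTransGen (fun a b => KStep a b ∨ KStep b a)

lemma Keq.refl (a : List ℕ) : Keq a a := Relation.ReflTransGen.refl

lemma Keq.trans {a b c : List ℕ} (h1 : Keq a b) (h2 : Keq b c) : Keq a c :=
  Relation.ReflTransGen.trans h1 h2

lemma Keq.symm {a b : List ℕ} (h : Keq a b) : Keq b a := by
  refine (@Relation.ReflTransGen.symmetric _ _ ⟨?_⟩).symm _ _ h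
  intro x y hxy; exact hxy.symm

lemma Keq.of_step {a b : List ℕ} (h : KStep a b) : Keq a b :=
  Relation.ReflTransGen.single (Or.inl h)

lemma KStep.append_left {a b : List ℕ} (c : List ℕ) (h : KStep a b) :
    KStep (c ++ a) (c ++ b) := by
  cases h with
  | kA u v h1 h2 =>
    rw [← List.append_assoc, ← List.append_assoc]; exact KStep.kA (c ++ u) v h1 h2
  | kB u v h1 h2 =>
    rw [← List.append_assoc, ← List.append_assoc]; exact KStep.kB (c ++ u) v h1 h2

lemma KStep.append_right {a b : List ℕ} (d : List ℕ) (h : KStep a b) :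
    KStep (a ++ d) (b ++ d) := by
  cases h with
  | kA u v h1 h2 =>
    simpa [List.append_assoc] using KStep.kA (x := _) u (v ++ d) h1 h2
  | kB u v h1 h2 =>
    simpa [List.append_assoc] using KStep.kB (x := _) u (v ++ d) h1 h2

lemma Keq.append_left {a b : List ℕ} (c : List ℕ) (h : Keq a b) : Keq (c ++ a) (c ++ b) := by
  induction h with
  | refl => exact Keq.refl _
  | tail _ h2 ih =>
    refine ih.trans (Relation.ReflTransGen.single ?_)
    rcases h2 with h2 | h2
    · exact Or.inl (h2.append_left c)
    · exact Or.inr (h2.append_left c)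

lemma Keq.append_right {a b : List ℕ} (d : List ℕ) (h : Keq a b) : Keq (a ++ d) (b ++ d) := by
  induction h with
  | refl => exact Keq.refl _
  | tail _ h2 ih =>
    refine ih.trans (Relation.ReflTransGen.single ?_)
    rcases h2 with h2 | h2
    · exact Or.inl (h2.append_right d)
    · exact Or.inr (h2.append_right d)

lemma KStep.perm {a b : List ℕ} (h : KStep a b) : a.Perm b := by
  cases h with
  | kA u v h1 h2 => exact (List.Perm.append_left u (List.Perm.swap _ _ _))
  | kB u v h1 h2 => exact (List.Perm.append_left u ((List.Perm.swap _ _ _).cons _))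

lemma Keq.perm {a b : List ℕ} (h : Keq a b) : a.Perm b := by
  induction h with
  | refl => exact List.Perm.refl _
  | tail _ h2 ih =>
    rcases h2 with h2 | h2
    · exact ih.trans h2.perm
    · exact ih.trans h2.perm.symm

lemma readT_nil : readT [] = [] := rfl

lemma readT_cons (r : List ℕ) (rs : List (List ℕ)) : readT (r :: rs) = readT rs ++ r := by
  simp [readT]

lemma rowInsert_cons_nil {r : List ℕ} {x : ℕ} (rs : List (List ℕ))
    (h : r.dropWhile (fun y => decide (y < x)) = []) :
    rowInsert (r :: rs) x = (r ++ [x]) :: rs := by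
  rw [rowInsert, h]

lemma rowInsert_cons_cons {r bs : List ℕ} {x y : ℕ} (rs : List (List ℕ))
    (h : r.dropWhile (fun y => decide (y < x)) = y :: bs) :
    rowInsert (r :: rs) x =
      (r.takeWhile (fun y => decide (y < x)) ++ x :: bs) :: rowInsert rs y := by
  rw [rowInsert, h]

lemma dropWhile_head_false {p : ℕ → Bool} {r bs : List ℕ} {y : ℕ}
    (h : r.dropWhile p = y :: bs) : p y = false := by
  induction r with
  | nil => simp at h
  | cons a r' ih =>
    by_cases ha : p a
    · rw [List.dropWhile_cons_of_pos ha] at h; exact ih h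
    · rw [List.dropWhile_cons_of_neg ha] at h
      cases h; simpa using ha

lemma bubble1 {x y : ℕ} (bs : List ℕ) (hxy : x < y) (hbs : bs.Pairwise (· < ·))
    (hyb : ∀ b ∈ bs, y < b) :
    Keq (y :: (bs ++ [x])) (y :: x :: bs) := by
  induction bs generalizing y with
  | nil => exact Keq.refl _
  | cons b bs' ih =>
    have hyb' : y < b := hyb b (List.mem_cons_self)
    rw [List.pairwise_cons] at hbs
    have h1 : Keq (b :: (bs' ++ [x])) (b :: x :: bs') :=
      ih (hxy.trans hyb') hbs.2 hbs.1
    have h2 : Keq (y :: b :: (bs' ++ [x])) (y :: b :: x :: bs') := h1.append_left [y]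
    refine h2.trans ?_
    exact (Keq.of_step (KStep.kB [] bs' hxy hyb')).symm

lemma bubble2 (t : List ℕ) {x y : ℕ} (bs : List ℕ) (hxy : x < y)
    (hta : ∀ a ∈ t, a < x) (hts : t.Pairwise (· < ·)) :
    Keq (t ++ y :: x :: bs) (y :: (t ++ x :: bs)) := by
  induction t using List.reverseRecOn generalizing x bs with
  | nil => exact Keq.refl _
  | append_singleton t' u ih =>
    have hux : u < x := hta u (by simp)
    rw [List.pairwise_append] at hts
    have s1 : KStep (t' ++ u :: y :: x :: bs) (t' ++ y :: u :: x :: bs) :=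
      KStep.kA t' bs hux hxy
    have s2 : Keq (t' ++ y :: u :: x :: bs) (y :: (t' ++ u :: x :: bs)) :=
      ih (x := u) (bs := x :: bs) (hux.trans hxy)
        (fun a ha => (hts.2.2 a ha u (by simp))) hts.1
    have : Keq (t' ++ u :: y :: x :: bs) (y :: (t' ++ u :: x :: bs)) :=
      (Keq.of_step s1).trans s2
    simpa [List.append_assoc] using this

lemma keq_insert (x : ℕ) {T : List (List ℕ)}
    (hs : ∀ r ∈ T, r.Pairwise (· < ·)) (hnd : (x :: T.flatten).Nodup) :
    Keq (readT T ++ [x]) (readT (rowInsert T x)) := by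
  induction T generalizing x with
  | nil =>
    rw [rowInsert, readT_nil, readT_cons, readT_nil]
    exact Keq.refl _
  | cons r rs ih =>
    cases hd : r.dropWhile (fun y => decide (y < x)) with
    | nil =>
      rw [rowInsert_cons_nil rs hd, readT_cons, readT_cons, List.append_assoc]
      exact Keq.refl _
    | cons y bs =>
      have hrsort : r.Pairwise (· < ·) := hs r (List.mem_cons_self)
      have hteq : r.takeWhile (fun y => decide (y < x)) ++ (y :: bs) = r := by
        rw [← hd]; exact List.takeWhile_append_dropWhile
      set t := r.takeWhile (fun y => decide (y < x)) with ht
      have hyr : y ∈ r := by rw [← hteq]; simp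
      have hrsplit : List.Pairwise (· < ·) (t ++ (y :: bs)) := by rw [hteq]; exact hrsort
      rw [List.pairwise_append] at hrsplit
      have hbs : ∀ b ∈ bs, y < b := (List.pairwise_cons.mp hrsplit.2.1).1
      have hbss : bs.Pairwise (· < ·) := (List.pairwise_cons.mp hrsplit.2.1).2
      have hts : t.Pairwise (· < ·) := hrsplit.1
      have hta : ∀ a ∈ t, a < x := by
        intro a ha
        simpa using List.mem_takeWhile_imp ha
      have hxy : x < y := by
        have hle : ¬ (y < x) := by simpa using dropWhile_head_false hd
        rcases List.nodup_cons.mp hnd with ⟨hxf, -⟩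
        have : x ≠ y := fun hh => hxf (by rw [hh, List.flatten_cons]; exact List.mem_append_left _ hyr)
        omega
      have hnd' : (y :: rs.flatten).Nodup := by
        rw [List.nodup_cons]
        rcases List.nodup_cons.mp hnd with ⟨-, hf⟩
        rw [List.flatten_cons, List.nodup_append] at hf
        exact ⟨fun hc => hf.2.2 y hyr y hc rfl, hf.2.1⟩
      rw [rowInsert_cons_cons rs hd, readT_cons, readT_cons]
      have step1 : Keq (y :: (bs ++ [x])) (y :: x :: bs) := bubble1 bs hxy hbss hbs
      have step2 : Keq (t ++ y :: x :: bs) (y :: (t ++ x :: bs)) :=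
        bubble2 t bs hxy hta hts
      have ihy : Keq (readT rs ++ [y]) (readT (rowInsert rs y)) :=
        ih y (fun r hr => hs r (List.mem_cons_of_mem _ hr)) hnd'
      have e1 : (readT rs ++ r) ++ [x] = (readT rs ++ t) ++ (y :: (bs ++ [x])) := by
        rw [← hteq]; simp
      rw [e1]
      have k1 : Keq ((readT rs ++ t) ++ (y :: (bs ++ [x]))) ((readT rs ++ t) ++ (y :: x :: bs)) :=
        step1.append_left _
      have k2 : Keq (readT rs ++ (t ++ y :: x :: bs)) (readT rs ++ (y :: (t ++ x :: bs))) :=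
        step2.append_left _
      have e2 : readT rs ++ (t ++ y :: x :: bs) = (readT rs ++ t) ++ (y :: x :: bs) := by simp
      have e3 : readT rs ++ (y :: (t ++ x :: bs)) = (readT rs ++ [y]) ++ (t ++ x :: bs) := by simp
      rw [e2, e3] at k2
      have k3 := ihy.append_right (t ++ x :: bs)
      exact k1.trans (k2.trans k3)

lemma getD_mid (t bs : List ℕ) (z : ℕ) : (t ++ z :: bs).getD t.length 0 = z := by
  rw [List.getD_append_right _ _ _ _ (le_refl _), Nat.sub_self, List.getD_cons_zero]

lemma getD_left {t : List ℕ} (l : List ℕ) {j : ℕ} (hj : j < t.length) :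
    (t ++ l).getD j 0 = t.getD j 0 := List.getD_append _ _ _ _ hj

lemma getD_mem {l : List ℕ} {j : ℕ} (hj : j < l.length) : l.getD j 0 ∈ l := by
  rw [List.getD_eq_getElem _ _ hj]; exact List.getElem_mem hj

lemma bump_getD {r bs : List ℕ} {x y : ℕ}
    (h : r.dropWhile (fun z => decide (z < x)) = y :: bs) (w : ℕ) :
    ∀ j, ((r.takeWhile (fun z => decide (z < x))) ++ w :: bs).getD j 0
      = if j = (r.takeWhile (fun z => decide (z < x))).length then w
        else r.getD j 0 := by
  set t := r.takeWhile (fun z => decide (z < x)) with ht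
  have hsplit : t ++ y :: bs = r := by rw [ht, ← h]; exact List.takeWhile_append_dropWhile
  intro j
  rcases lt_trichotomy j t.length with hj | hj | hj
  · rw [getD_left _ hj, if_neg (by omega), ← hsplit, getD_left _ hj]
  · rw [hj, if_pos rfl, getD_mid]
  · rw [if_neg (by omega), ← hsplit]
    obtain ⟨m, hm⟩ : ∃ m, j - t.length = m + 1 := ⟨j - t.length - 1, by omega⟩
    rw [List.getD_append_right _ _ _ _ (by omega), List.getD_append_right _ _ _ _ (by omega),
      hm, List.getD_cons_succ, List.getD_cons_succ]

lemma bump_sorted {r bs : List ℕ} {x y : ℕ}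
    (h : r.dropWhile (fun z => decide (z < x)) = y :: bs) (hrs : r.Pairwise (· < ·)) :
    ((r.takeWhile (fun z => decide (z < x))) ++ x :: bs).Pairwise (· < ·) := by
  set t := r.takeWhile (fun z => decide (z < x)) with ht
  have hsplit : t ++ y :: bs = r := by rw [ht, ← h]; exact List.takeWhile_append_dropWhile
  have hxy : x ≤ y := by simpa using dropWhile_head_false h
  have hpw : (t ++ y :: bs).Pairwise (· < ·) := by rw [hsplit]; exact hrs
  rw [List.pairwise_append] at hpw ⊢
  obtain ⟨pt, pyb, cross⟩ := hpw
  rw [List.pairwise_cons] at pyb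
  refine ⟨pt, ?_, ?_⟩
  · rw [List.pairwise_cons]
    exact ⟨fun b hb => lt_of_le_of_lt hxy (pyb.1 b hb), pyb.2⟩
  · intro a ha b hb
    have hax : a < x := by
      have := List.mem_takeWhile_imp (ht ▸ ha)
      simpa using this
    rcases List.mem_cons.mp hb with rfl | hb
    · exact hax
    · exact lt_of_lt_of_le hax (le_trans hxy (le_of_lt (pyb.1 b hb)))

lemma isTab_rowInsert (x : ℕ) {T : List (List ℕ)} (h : IsTab T)
    (hnd : (x :: T.flatten).Nodup) : IsTab (rowInsert T x) := by
  revert h hnd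
  induction T generalizing x with
  | nil =>
    intro _ _
    rw [rowInsert]
    refine ⟨by simp, by simp, ?_, ?_⟩
    · intro i; rcases i with _ | i <;> simp
    · intro i j hj
      rcases i with _ | i <;> simp at hj
  | cons r rs ih =>
    intro h hnd
    obtain ⟨hne, hsort, hshape, hcol⟩ := h
    have hrs : r.Pairwise (· < ·) := hsort r (List.mem_cons_self)
    have htab_rs : IsTab rs := by
      refine ⟨fun a ha => hne _ (List.mem_cons_of_mem _ ha),
        fun a ha => hsort _ (List.mem_cons_of_mem _ ha), fun i => ?_, fun i j hj => ?_⟩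
      · have := hshape (i + 1); simpa using this
      · have := hcol (i + 1) j (by simpa using hj); simpa using this
    cases hd : r.dropWhile (fun z => decide (z < x)) with
    | nil =>
      rw [rowInsert_cons_nil rs hd]
      have hall : ∀ a ∈ r, a < x := by
        have := List.dropWhile_eq_nil_iff.mp hd
        intro a ha; simpa using this a ha
      refine ⟨?_, ?_, ?_, ?_⟩
      · intro a ha
        rcases List.mem_cons.mp ha with rfl | ha
        · simp
        · exact hne _ (List.mem_cons_of_mem _ ha)
      · intro a ha
        rcases List.mem_cons.mp ha with rfl | ha
        · rw [List.pairwise_append]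
          exact ⟨hrs, by simp, fun a ha b hb => by rw [List.mem_singleton.mp hb]; exact hall a ha⟩
        · exact hsort _ (List.mem_cons_of_mem _ ha)
      · intro i
        rcases i with _ | i
        · have := hshape 0; simp at this ⊢; omega
        · have := hshape (i + 1); simpa using this
      · intro i j hj
        rcases i with _ | i
        · simp only [List.getD_cons_succ, List.getD_cons_zero] at hj ⊢
          have hj' : j < r.length := lt_of_lt_of_le hj (by simpa using hshape 0)
          rw [getD_left _ hj']
          have := hcol 0 j (by simpa using hj); simpa using this
        · have := hcol (i + 1) j (by simpa using hj); simpa using this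
    | cons y bs =>
      rw [rowInsert_cons_cons rs hd]
      set t := r.takeWhile (fun z => decide (z < x)) with ht
      have hsplit : t ++ y :: bs = r := by rw [ht, ← hd]; exact List.takeWhile_append_dropWhile
      have hxley : x ≤ y := by simpa using dropWhile_head_false hd
      have hyr : y ∈ r := by rw [← hsplit]; simp
      have hxy : x < y := by
        rcases List.nodup_cons.mp hnd with ⟨hxf, -⟩
        have : x ≠ y := fun hh => hxf (by rw [hh, List.flatten_cons]; exact List.mem_append_left _ hyr)
        omega
      have hlen0 : (t ++ x :: bs).length = r.length := by rw [← hsplit]; simp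
      have hget0 := bump_getD hd x
      have hnew0 : (t ++ x :: bs).Pairwise (· < ·) := bump_sorted hd hrs
      have htlt : t.length < r.length := by rw [← hsplit]; simp
      have hytl : r.getD t.length 0 = y := by rw [← hsplit]; exact getD_mid _ _ _
      have htmem : ∀ j < t.length, r.getD j 0 < x := by
        intro j hj
        rw [← hsplit, getD_left _ hj]
        have := List.mem_takeWhile_imp (l := r) (p := fun z => decide (z < x))
          (x := t.getD j 0) (by rw [← ht]; exact getD_mem hj)
        simpa using this
      have hnd' : (y :: rs.flatten).Nodup := by
        rw [List.nodup_cons]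
        rcases List.nodup_cons.mp hnd with ⟨-, hf⟩
        rw [List.flatten_cons, List.nodup_append] at hf
        exact ⟨fun hc => hf.2.2 y hyr y hc rfl, hf.2.1⟩
      have htabI : IsTab (rowInsert rs y) := ih y htab_rs hnd'
      have hne0 : t ++ x :: bs ≠ [] := by simp
      -- interface facts depending on the shape of `rs`
      obtain ⟨hlenI, key⟩ : ((rowInsert rs y).getD 0 []).length ≤ r.length ∧
          ∀ j < ((rowInsert rs y).getD 0 []).length,
            (t ++ x :: bs).getD j 0 < ((rowInsert rs y).getD 0 []).getD j 0 := by
        cases rs with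
        | nil =>
          rw [rowInsert]
          simp only [List.getD_cons_zero]
          constructor
          · simp; omega
          · intro j hj
            simp only [List.length_singleton] at hj
            have hj0 : j = 0 := by omega
            subst hj0
            rw [hget0 0]
            simp only [List.getD_cons_zero]
            by_cases h0 : 0 = t.length
            · rw [if_pos h0]; exact hxy
            · rw [if_neg h0]
              have := htmem 0 (by omega)
              omega
        | cons s rs' =>
          have hsh0 : s.length ≤ r.length := by simpa using hshape 0
          have hc0 : ∀ j < s.length, r.getD j 0 < s.getD j 0 := by
            intro j hj
            have := hcol 0 j (by simpa using hj); simpa using this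
          cases hq : s.dropWhile (fun z => decide (z < y)) with
          | nil =>
            rw [rowInsert_cons_nil rs' hq]
            simp only [List.getD_cons_zero]
            have halls : ∀ a ∈ s, a < y := by
              have := List.dropWhile_eq_nil_iff.mp hq
              intro a ha; simpa using this a ha
            have hslt : s.length < r.length := by
              by_contra hcon
              push_neg at hcon
              have h1 : t.length < s.length := by omega
              have h2 := hc0 t.length h1
              rw [hytl] at h2
              have h3 := halls _ (getD_mem h1)
              omega
            constructor
            · simp; omega
            · intro j hj
              simp only [List.length_append, List.length_singleton] at hj
              rcases Nat.lt_or_ge j s.length with hjs | hjs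
              · rw [getD_left _ hjs, hget0 j]
                by_cases hjt : j = t.length
                · rw [if_pos hjt]
                  have h2 := hc0 t.length (by omega)
                  rw [hytl] at h2
                  rw [hjt]; omega
                · rw [if_neg hjt]; exact hc0 j hjs
              · have hj' : j = s.length := by omega
                subst hj'
                have hmid : (s ++ [y]).getD s.length 0 = y := getD_mid s [] y
                rw [hmid, hget0 s.length]
                by_cases hjt : s.length = t.length
                · rw [if_pos hjt]; exact hxy
                · rw [if_neg hjt]
                  have hjlt : s.length < t.length := by
                    by_contra hcon
                    push_neg at hcon
                    have h1 : t.length < s.length := by omega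
                    have h2 := hc0 t.length h1
                    rw [hytl] at h2
                    have h3 := halls _ (getD_mem h1)
                    omega
                  have := htmem s.length hjlt
                  omega
          | cons y' bs' =>
            rw [rowInsert_cons_cons rs' hq]
            simp only [List.getD_cons_zero]
            set t' := s.takeWhile (fun z => decide (z < y)) with ht'
            have hsplit' : t' ++ y' :: bs' = s := by
              rw [ht', ← hq]; exact List.takeWhile_append_dropWhile
            have hget1 := bump_getD hq y
            have hlen1 : (t' ++ y :: bs').length = s.length := by rw [← hsplit']; simp
            have ht'lt : t'.length < s.length := by rw [← hsplit']; simp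
            have hy'tl : s.getD t'.length 0 = y' := by rw [← hsplit']; exact getD_mid _ _ _
            have htmem' : ∀ j < t'.length, s.getD j 0 < y := by
              intro j hj
              rw [← hsplit', getD_left _ hj]
              have := List.mem_takeWhile_imp (l := s) (p := fun z => decide (z < y))
                (x := t'.getD j 0) (by rw [← ht']; exact getD_mem hj)
              simpa using this
            have ht'le : t'.length ≤ t.length := by
              by_contra hcon
              push_neg at hcon
              have h1 : t.length < s.length := by omega
              have h2 := hc0 t.length h1
              rw [hytl] at h2
              have h3 := htmem' t.length hcon
              omega
            constructor
            · rw [hlen1]; exact hsh0.trans (le_of_eq rfl) |>.trans (le_refl _) |>.trans (by omega)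
            · intro j hj
              rw [hlen1] at hj
              rw [hget1 j, hget0 j]
              by_cases hjt' : j = t'.length
              · rw [if_pos hjt']
                by_cases hjt : j = t.length
                · rw [if_pos hjt]; exact hxy
                · rw [if_neg hjt]
                  have hjlt : j < t.length := by omega
                  have := htmem j hjlt
                  omega
              · rw [if_neg hjt']
                by_cases hjt : j = t.length
                · rw [if_pos hjt]
                  have h2 := hc0 t.length (by omega)
                  rw [hytl] at h2
                  rw [hjt]
                  omega
                · rw [if_neg hjt]; exact hc0 j hj
      refine ⟨?_, ?_, ?_, ?_⟩
      · intro a ha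
        rcases List.mem_cons.mp ha with rfl | ha
        · exact hne0
        · exact htabI.1 a ha
      · intro a ha
        rcases List.mem_cons.mp ha with rfl | ha
        · exact hnew0
        · exact htabI.2.1 a ha
      · intro i
        rcases i with _ | i
        · simp only [List.getD_cons_succ, List.getD_cons_zero]
          rw [hlen0]
          exact hlenI
        · have := htabI.2.2.1 i; simpa using this
      · intro i j hj
        rcases i with _ | i
        · simp only [List.getD_cons_succ, List.getD_cons_zero] at hj ⊢
          exact key j hj
        · have := htabI.2.2.2 i j (by simpa using hj); simpa using this

lemma subseq_of_middle {R : ℕ → ℕ → Prop} {u v mid mid' : List ℕ}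
    (h : ∀ lm : List ℕ, lm.Sublist mid → lm.Pairwise R →
      ∃ lm' : List ℕ, lm'.Sublist mid' ∧ lm'.length = lm.length ∧ lm'.Pairwise R ∧
        (∀ c, (∀ a ∈ lm, R c a) → ∀ a ∈ lm', R c a) ∧
        (∀ c, (∀ a ∈ lm, R a c) → ∀ a ∈ lm', R a c))
    {k : ℕ} (hk : Subseq R (u ++ (mid ++ v)) k) : Subseq R (u ++ (mid' ++ v)) k := by
  obtain ⟨l, hsub, hpw, rfl⟩ := hk
  rw [List.sublist_append_iff] at hsub
  obtain ⟨lu, lrest, rfl, hlu, hrest⟩ := hsub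
  rw [List.sublist_append_iff] at hrest
  obtain ⟨lm, lv, rfl, hlm, hlv⟩ := hrest
  rw [List.pairwise_append] at hpw
  obtain ⟨pwu, pwmv, crossu⟩ := hpw
  rw [List.pairwise_append] at pwmv
  obtain ⟨pwm, pwv, crossmv⟩ := pwmv
  obtain ⟨lm', hsub', hlen', pw', hc1, hc2⟩ := h lm hlm pwm
  refine ⟨lu ++ (lm' ++ lv), hlu.append (hsub'.append hlv), ?_, by simp [hlen']⟩
  rw [List.pairwise_append]
  refine ⟨pwu, ?_, ?_⟩
  · rw [List.pairwise_append]
    exact ⟨pw', pwv, fun a ha b hb => hc2 b (fun a' ha' => crossmv a' ha' b hb) a ha⟩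
  · intro a ha b hb
    rcases List.mem_append.mp hb with hb | hb
    · exact hc1 a (fun a' ha' => crossu a ha a' (List.mem_append_left _ ha')) b hb
    · exact crossu a ha b (List.mem_append_right _ hb)

lemma sublist_triple {l : List ℕ} {a b c : ℕ} (h : l.Sublist [a, b, c]) :
    l = [] ∨ l = [a] ∨ l = [b] ∨ l = [c] ∨ l = [a, b] ∨ l = [a, c] ∨ l = [b, c] ∨
      l = [a, b, c] := by
  cases h with
  | cons _ h1 =>
    cases h1 with
    | cons _ h2 =>
      cases h2 with
      | cons _ h3 => simp_all
      | cons_cons _ h3 => simp_all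
    | cons_cons _ h2 =>
      cases h2 with
      | cons _ h3 => simp_all
      | cons_cons _ h3 => simp_all
  | cons_cons _ h1 =>
    cases h1 with
    | cons _ h2 =>
      cases h2 with
      | cons _ h3 => simp_all
      | cons_cons _ h3 => simp_all
    | cons_cons _ h2 =>
      cases h2 with
      | cons _ h3 => simp_all
      | cons_cons _ h3 => simp_all

lemma kstep_subseq_lt_mp {w w' : List ℕ} (h : KStep w w') (k : ℕ)
    (hk : Subseq (· < ·) w k) : Subseq (· < ·) w' k := by
  cases h with
  | kA u v h1 h2 =>
    rename_i x y z
    refine subseq_of_middle (mid := [x, z, y]) (mid' := [z, x, y]) ?_ hk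
    intro lm hsub hpw
    rcases sublist_triple hsub with rfl | rfl | rfl | rfl | rfl | rfl | rfl | rfl
    · exact ⟨[], List.nil_sublist _, rfl, by simp, by simp, by simp⟩
    · exact ⟨[x], (((List.nil_sublist [y]).cons₂ x).cons z), rfl, by simp,
        by simp +contextual, by simp +contextual⟩
    · exact ⟨[z], ((((List.nil_sublist [y]).cons x).cons₂ z)), rfl, by simp,
        by simp +contextual, by simp +contextual⟩
    · exact ⟨[y], ((((List.nil_sublist []).cons₂ y).cons x).cons z), rfl, by simp,
        by simp +contextual, by simp +contextual⟩
    · -- lm = [x, z] : replace by [x, y]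
      refine ⟨[x, y], ((((List.nil_sublist []).cons₂ y).cons₂ x).cons z), rfl,
        by simp [h1], ?_, ?_⟩
      · intro c hc; simp at hc ⊢; omega
      · intro c hc; simp at hc ⊢; omega
    · exact ⟨[x, y], ((((List.nil_sublist []).cons₂ y).cons₂ x).cons z), rfl, hpw,
        fun c hc => hc, fun c hc => hc⟩
    · simp at hpw; omega
    · simp at hpw; omega
  | kB u v h1 h2 =>
    rename_i x y z
    refine subseq_of_middle (mid := [y, x, z]) (mid' := [y, z, x]) ?_ hk
    intro lm hsub hpw
    rcases sublist_triple hsub with rfl | rfl | rfl | rfl | rfl | rfl | rfl | rfl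
    · exact ⟨[], List.nil_sublist _, rfl, by simp, by simp, by simp⟩
    · exact ⟨[y], (((List.nil_sublist [x]).cons z).cons₂ y), rfl, by simp,
        by simp +contextual, by simp +contextual⟩
    · exact ⟨[x], ((((List.nil_sublist []).cons₂ x).cons z).cons y), rfl, by simp,
        by simp +contextual, by simp +contextual⟩
    · exact ⟨[z], ((((List.nil_sublist [x]).cons₂ z).cons y)), rfl, by simp,
        by simp +contextual, by simp +contextual⟩
    · simp at hpw; omega
    · exact ⟨[y, z], (((List.nil_sublist [x]).cons₂ z).cons₂ y), rfl, hpw,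
        fun c hc => hc, fun c hc => hc⟩
    · -- lm = [x, z] : replace by [y, z]
      refine ⟨[y, z], ((((List.nil_sublist [x]).cons₂ z).cons₂ y)), rfl,
        by simp [h2], ?_, ?_⟩
      · intro c hc; simp at hc ⊢; omega
      · intro c hc; simp at hc ⊢; omega
    · simp at hpw; omega

lemma kstep_subseq_lt_mpr {w w' : List ℕ} (h : KStep w w') (k : ℕ)
    (hk : Subseq (· < ·) w' k) : Subseq (· < ·) w k := by
  cases h with
  | kA u v h1 h2 =>
    rename_i x y z
    refine subseq_of_middle (mid := [z, x, y]) (mid' := [x, z, y]) ?_ hk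
    intro lm hsub hpw
    rcases sublist_triple hsub with rfl | rfl | rfl | rfl | rfl | rfl | rfl | rfl
    · exact ⟨[], List.nil_sublist _, rfl, by simp, by simp, by simp⟩
    · exact ⟨[z], (((List.nil_sublist [y]).cons₂ z).cons x), rfl, by simp,
        by simp +contextual, by simp +contextual⟩
    · exact ⟨[x], ((List.nil_sublist [z, y]).cons₂ x), rfl, by simp,
        by simp +contextual, by simp +contextual⟩
    · exact ⟨[y], ((((List.nil_sublist []).cons₂ y).cons z).cons x), rfl, by simp,
        by simp +contextual, by simp +contextual⟩
    · simp at hpw; omega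
    · simp at hpw; omega
    · exact ⟨[x, y], ((((List.nil_sublist []).cons₂ y).cons z).cons₂ x), rfl,
        by simp [h1], by simp +contextual, by simp +contextual⟩
    · simp at hpw; omega
  | kB u v h1 h2 =>
    rename_i x y z
    refine subseq_of_middle (mid := [y, z, x]) (mid' := [y, x, z]) ?_ hk
    intro lm hsub hpw
    rcases sublist_triple hsub with rfl | rfl | rfl | rfl | rfl | rfl | rfl | rfl
    · exact ⟨[], List.nil_sublist _, rfl, by simp, by simp, by simp⟩
    · exact ⟨[y], (((List.nil_sublist [z]).cons x).cons₂ y), rfl, by simp,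
        by simp +contextual, by simp +contextual⟩
    · exact ⟨[z], ((((List.nil_sublist []).cons₂ z).cons x).cons y), rfl, by simp,
        by simp +contextual, by simp +contextual⟩
    · exact ⟨[x], (((List.nil_sublist [z]).cons₂ x).cons y), rfl, by simp,
        by simp +contextual, by simp +contextual⟩
    · exact ⟨[y, z], ((((List.nil_sublist []).cons₂ z).cons x).cons₂ y), rfl,
        by simp [h2], by simp +contextual, by simp +contextual⟩
    · simp at hpw; omega
    · simp at hpw; omega
    · simp at hpw; omega

lemma kstep_reverse {a b : List ℕ} (h : KStep a b) : KStep b.reverse a.reverse := by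
  cases h with
  | kA u v h1 h2 =>
    rename_i x y z
    have := KStep.kB (u := v.reverse) (v := u.reverse) h1 h2
    simpa [List.reverse_append] using this
  | kB u v h1 h2 =>
    rename_i x y z
    have := KStep.kA (u := v.reverse) (v := u.reverse) h1 h2
    simpa [List.reverse_append] using this

lemma subseq_gt_iff_reverse {w : List ℕ} {k : ℕ} :
    Subseq (· > ·) w k ↔ Subseq (· < ·) w.reverse k := by
  constructor
  · rintro ⟨l, hsub, hpw, rfl⟩
    exact ⟨l.reverse, hsub.reverse, List.pairwise_reverse.mpr hpw, by simp⟩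
  · rintro ⟨l, hsub, hpw, rfl⟩
    refine ⟨l.reverse, ?_, List.pairwise_reverse.mpr (by simpa using hpw), by simp⟩
    simpa using hsub.reverse

lemma keq_subseq_lt {w w' : List ℕ} (h : Keq w w') (k : ℕ) :
    Subseq (· < ·) w k ↔ Subseq (· < ·) w' k := by
  induction h with
  | refl => exact Iff.rfl
  | tail _ h2 ih =>
    refine ih.trans ?_
    rcases h2 with h2 | h2
    · exact ⟨kstep_subseq_lt_mp h2 k, kstep_subseq_lt_mpr h2 k⟩
    · exact ⟨kstep_subseq_lt_mpr h2 k, kstep_subseq_lt_mp h2 k⟩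

lemma keq_reverse {w w' : List ℕ} (h : Keq w w') : Keq w.reverse w'.reverse := by
  induction h with
  | refl => exact Keq.refl _
  | tail _ h2 ih =>
    refine ih.trans (Relation.ReflTransGen.single ?_)
    rcases h2 with h2 | h2
    · exact Or.inr (kstep_reverse h2)
    · exact Or.inl (kstep_reverse h2)

lemma keq_subseq_gt {w w' : List ℕ} (h : Keq w w') (k : ℕ) :
    Subseq (· > ·) w k ↔ Subseq (· > ·) w' k := by
  rw [subseq_gt_iff_reverse, subseq_gt_iff_reverse]
  exact keq_subseq_lt (keq_reverse h) k

lemma shape_mono {T : List (List ℕ)} (hT : IsTab T) :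
    ∀ p q, p ≤ q → (T.getD q []).length ≤ (T.getD p []).length := by
  intro p q h
  induction q with
  | zero => interval_cases p; rfl
  | succ q ih =>
    rcases Nat.lt_or_ge p (q + 1) with h' | h'
    · exact le_trans (hT.2.2.1 q) (ih (by omega))
    · have : p = q + 1 := by omega
      rw [this]

lemma col_lt {T : List (List ℕ)} (hT : IsTab T) :
    ∀ p q j, p < q → j < (T.getD q []).length →
      (T.getD p []).getD j 0 < (T.getD q []).getD j 0 := by
  intro p q j hpq hj
  induction q with
  | zero => omega
  | succ q ih =>
    rcases Nat.lt_or_ge p q with h | h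
    · have hq : j < (T.getD q []).length := lt_of_lt_of_le hj (hT.2.2.1 q)
      exact (ih h hq).trans (hT.2.2.2 q j hj)
    · have hpq' : p = q := by omega
      rw [hpq']; exact hT.2.2.2 q j hj

/-- Row index of an entry. -/
def rowIdxOf (T : List (List ℕ)) (v : ℕ) : ℕ := T.findIdx (fun row => decide (v ∈ row))

/-- Column index of an entry. -/
def colIdxOf (T : List (List ℕ)) (v : ℕ) : ℕ := (T.getD (rowIdxOf T v) []).idxOf v

lemma rowIdxOf_spec {T : List (List ℕ)} {v : ℕ} (hv : v ∈ T.flatten) :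
    rowIdxOf T v < T.length ∧ v ∈ T.getD (rowIdxOf T v) [] := by
  rw [List.mem_flatten] at hv
  obtain ⟨row, hrow, hvr⟩ := hv
  have hlt : rowIdxOf T v < T.length :=
    List.findIdx_lt_length_of_exists ⟨row, hrow, by simpa using hvr⟩
  refine ⟨hlt, ?_⟩
  rw [List.getD_eq_getElem _ _ hlt]
  exact of_decide_eq_true (List.findIdx_getElem (w := hlt))

lemma rowIdxOf_eq {T : List (List ℕ)} (hnd : T.flatten.Nodup) {v : ℕ} {i : ℕ}
    (hi : i < T.length) (hv : v ∈ T.getD i []) : rowIdxOf T v = i := by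
  have hvf : v ∈ T.flatten := by
    rw [List.mem_flatten]
    exact ⟨T.getD i [], by rw [List.getD_eq_getElem _ _ hi]; exact List.getElem_mem hi, hv⟩
  obtain ⟨hlt, hmem⟩ := rowIdxOf_spec hvf
  by_contra hne
  rw [List.nodup_flatten] at hnd
  have hdisj := List.pairwise_iff_getElem.mp hnd.2
  rcases Nat.lt_or_ge (rowIdxOf T v) i with h | h
  · exact (hdisj _ _ hlt hi h) (by rwa [List.getD_eq_getElem _ _ hlt] at hmem)
      (by rwa [List.getD_eq_getElem _ _ hi] at hv)
  · have h' : i < rowIdxOf T v := by omega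
    exact (hdisj _ _ hi hlt h') (by rwa [List.getD_eq_getElem _ _ hi] at hv)
      (by rwa [List.getD_eq_getElem _ _ hlt] at hmem)

lemma mem_readT {T : List (List ℕ)} {a : ℕ} : a ∈ readT T ↔ a ∈ T.flatten := by
  simp [readT]

lemma readT_nodup {T : List (List ℕ)} (h : (readT T).Nodup) : T.flatten.Nodup :=
  ((List.reverse_perm T).flatten).nodup_iff.mp h

lemma read_pairwise_col {T : List (List ℕ)} (hT : IsTab T) (hnd : T.flatten.Nodup) :
    (readT T).Pairwise (fun a b => colIdxOf T a = colIdxOf T b → b < a) := by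
  rw [readT, List.pairwise_flatten]
  constructor
  · intro l hl
    rw [List.mem_reverse] at hl
    obtain ⟨i, hi, rfl⟩ := List.getElem_of_mem hl
    have hrow : ∀ a ∈ T[i], rowIdxOf T a = i := fun a ha =>
      rowIdxOf_eq hnd hi (by rwa [List.getD_eq_getElem _ _ hi])
    have hsort : T[i].Pairwise (· < ·) := hT.2.1 _ (List.getElem_mem hi)
    have hndr : T[i].Nodup := hsort.imp (fun h => Nat.ne_of_lt h)
    refine hsort.imp_of_mem ?_
    intro a b ha hb hab heq
    exfalso
    have hca : colIdxOf T a = T[i].idxOf a := by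
      unfold colIdxOf; rw [hrow a ha, List.getD_eq_getElem _ _ hi]
    have hcb : colIdxOf T b = T[i].idxOf b := by
      unfold colIdxOf; rw [hrow b hb, List.getD_eq_getElem _ _ hi]
    rw [hca, hcb] at heq
    have : a = b := (List.idxOf_inj ha).mp heq
    omega
  · rw [List.pairwise_reverse]
    rw [List.pairwise_iff_getElem]
    intro p q hp hq hpq a ha b hb heq
    have hra : rowIdxOf T a = q := rowIdxOf_eq hnd hq (by rwa [List.getD_eq_getElem _ _ hq])
    have hrb : rowIdxOf T b = p := rowIdxOf_eq hnd hp (by rwa [List.getD_eq_getElem _ _ hp])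
    have hja : colIdxOf T a < (T.getD q []).length := by
      unfold colIdxOf; rw [hra]
      rw [List.getD_eq_getElem _ _ hq]
      exact List.idxOf_lt_length_iff.mpr ha
    have hjb : colIdxOf T b < (T.getD p []).length := by
      unfold colIdxOf; rw [hrb]
      rw [List.getD_eq_getElem _ _ hp]
      exact List.idxOf_lt_length_iff.mpr hb
    have hja' : List.idxOf a T[q] < T[q].length := List.idxOf_lt_length_iff.mpr ha
    have hjb' : List.idxOf b T[p] < T[p].length := List.idxOf_lt_length_iff.mpr hb
    have hav : (T.getD q []).getD (colIdxOf T a) 0 = a := by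
      unfold colIdxOf
      rw [hra, List.getD_eq_getElem _ _ hq, List.getD_eq_getElem _ _ hja']
      exact List.getElem_idxOf _
    have hbv : (T.getD p []).getD (colIdxOf T b) 0 = b := by
      unfold colIdxOf
      rw [hrb, List.getD_eq_getElem _ _ hp, List.getD_eq_getElem _ _ hjb']
      exact List.getElem_idxOf _
    have hcl := col_lt hT p q (colIdxOf T a) hpq hja
    rw [hav, heq, hbv] at hcl
    exact hcl

lemma read_pairwise_row {T : List (List ℕ)} (hT : IsTab T) (hnd : T.flatten.Nodup) :
    (readT T).Pairwise (fun a b => rowIdxOf T a = rowIdxOf T b → a < b) := by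
  rw [readT, List.pairwise_flatten]
  constructor
  · intro l hl
    rw [List.mem_reverse] at hl
    have hsort : l.Pairwise (· < ·) := hT.2.1 _ hl
    exact hsort.imp (fun h => fun _ => h)
  · rw [List.pairwise_reverse, List.pairwise_iff_getElem]
    intro p q hp hq hpq a ha b hb heq
    exfalso
    have hra : rowIdxOf T a = q := rowIdxOf_eq hnd hq (by rwa [List.getD_eq_getElem _ _ hq])
    have hrb : rowIdxOf T b = p := rowIdxOf_eq hnd hp (by rwa [List.getD_eq_getElem _ _ hp])
    omega

lemma nodup_lt_length {l : List ℕ} (h : l.Nodup) {C : ℕ} (hb : ∀ x ∈ l, x < C) :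
    l.length ≤ C := by
  have h1 : l.toFinset ⊆ Finset.range C := by
    intro x hx
    rw [Finset.mem_range]
    exact hb x (List.mem_toFinset.mp hx)
  have := Finset.card_le_card h1
  rwa [List.toFinset_card_of_nodup h, Finset.card_range] at this

lemma greatest_cols {T : List (List ℕ)} (hT : IsTab T) (hnd : (readT T).Nodup) :
    IsGreatest {k | Subseq (· < ·) (readT T) k} ((T.getD 0 []).length) := by
  have hndf : T.flatten.Nodup := readT_nodup hnd
  constructor
  · cases T with
    | nil => exact ⟨[], by simp, by simp, by simp⟩
    | cons r rs =>
      refine ⟨r, ?_, hT.2.1 r (List.mem_cons_self), by simp⟩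
      rw [readT_cons]
      exact List.sublist_append_right _ _
  · rintro k ⟨l, hsub, hpw, rfl⟩
    have pw2 := (read_pairwise_col hT hndf).sublist hsub
    have pwne : l.Pairwise (fun a b => colIdxOf T a ≠ colIdxOf T b) := by
      have := hpw.and pw2
      exact this.imp (fun ⟨h1, h2⟩ heq => absurd (h2 heq) (by omega))
    have hmapnd : (l.map (colIdxOf T)).Nodup := List.pairwise_map.mpr pwne
    have hbnd : ∀ x ∈ l.map (colIdxOf T), x < (T.getD 0 []).length := by
      intro x hx
      rw [List.mem_map] at hx
      obtain ⟨a, ha, rfl⟩ := hx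
      have haf : a ∈ T.flatten := mem_readT.mp (hsub.subset ha)
      obtain ⟨hlt, hmem⟩ := rowIdxOf_spec haf
      have : colIdxOf T a < (T.getD (rowIdxOf T a) []).length :=
        List.idxOf_lt_length_iff.mpr hmem
      exact lt_of_lt_of_le this (shape_mono hT 0 _ (Nat.zero_le _))
    have := nodup_lt_length hmapnd hbnd
    simpa using this

lemma sel_heads_sublist : ∀ (L : List (List ℕ)), (∀ r ∈ L, r ≠ []) →
    (L.map (fun r => r.getD 0 0)).Sublist L.flatten := by
  intro L
  induction L with
  | nil => simp
  | cons r L' ih =>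
    intro h
    rw [List.map_cons, List.flatten_cons]
    have hr : r = r.getD 0 0 :: r.tail := by
      cases r with
      | nil => exact absurd rfl (h [] (List.mem_cons_self))
      | cons a r' => rfl
    rw [hr]
    exact ((ih (fun r hr => h r (List.mem_cons_of_mem _ hr))).trans
      (List.sublist_append_right _ _)).cons₂ _

lemma greatest_rows {T : List (List ℕ)} (hT : IsTab T) (hnd : (readT T).Nodup) :
    IsGreatest {k | Subseq (· > ·) (readT T) k} T.length := by
  have hndf : T.flatten.Nodup := readT_nodup hnd
  constructor
  · refine ⟨T.reverse.map (fun r => r.getD 0 0), ?_, ?_, by simp⟩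
    · exact sel_heads_sublist T.reverse (fun r hr => hT.1 r (List.mem_reverse.mp hr))
    · rw [List.pairwise_map, List.pairwise_reverse, List.pairwise_iff_getElem]
      intro p q hp hq hpq
      have hq0 : 0 < (T.getD q []).length := by
        rw [List.getD_eq_getElem _ _ hq]
        exact List.length_pos_iff.mpr (hT.1 _ (List.getElem_mem hq))
      have := col_lt hT p q 0 hpq hq0
      rw [List.getD_eq_getElem _ _ hq, List.getD_eq_getElem _ _ hp] at this
      exact this
  · rintro k ⟨l, hsub, hpw, rfl⟩
    have pw2 := (read_pairwise_row hT hndf).sublist hsub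
    have pwne : l.Pairwise (fun a b => rowIdxOf T a ≠ rowIdxOf T b) := by
      have := hpw.and pw2
      exact this.imp (fun ⟨h1, h2⟩ heq => absurd (h2 heq) (by omega))
    have hmapnd : (l.map (rowIdxOf T)).Nodup := List.pairwise_map.mpr pwne
    have hbnd : ∀ x ∈ l.map (rowIdxOf T), x < T.length := by
      intro x hx
      rw [List.mem_map] at hx
      obtain ⟨a, ha, rfl⟩ := hx
      exact (rowIdxOf_spec (mem_readT.mp (hsub.subset ha))).1
    have := nodup_lt_length hmapnd hbnd
    simpa using this

lemma pins_spec {w : List ℕ} (h : w.Nodup) : IsTab (Pins w) ∧ Keq w (readT (Pins w)) := by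
  induction w using List.reverseRecOn with
  | nil =>
    refine ⟨⟨?_, ?_, ?_, ?_⟩, Keq.refl _⟩ <;> simp [Pins]
  | append_singleton w x ih =>
    simp only [List.nodup_append, List.nodup_cons] at h
    obtain ⟨hw, -, hx⟩ := h
    obtain ⟨hT, hk⟩ := ih hw
    have hPins : Pins (w ++ [x]) = rowInsert (Pins w) x := by
      simp [Pins, List.foldl_append]
    have hflat : w.Perm (Pins w).flatten :=
      hk.perm.trans ((List.reverse_perm (Pins w)).flatten)
    have hndx : (x :: (Pins w).flatten).Nodup := by
      rw [List.nodup_cons]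
      constructor
      · exact fun hmem => hx x (hflat.mem_iff.mpr hmem) x (List.mem_singleton_self x) rfl
      · exact hflat.nodup_iff.mp hw
    refine ⟨hPins ▸ isTab_rowInsert x hT hndx, ?_⟩
    have h1 : Keq (w ++ [x]) (readT (Pins w) ++ [x]) := hk.append_right [x]
    refine h1.trans ?_
    rw [hPins]
    exact keq_insert x hT.2.1 hndx

theorem schensted {w : List ℕ} (h : w.Nodup) :
    sSup {k | Subseq (· < ·) w k} = ((Pins w).getD 0 []).length ∧
    sSup {k | Subseq (· > ·) w k} = (Pins w).length := by
  obtain ⟨hT, hk⟩ := pins_spec h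
  have hnd : (readT (Pins w)).Nodup := hk.perm.nodup_iff.mp h
  have e1 : {k | Subseq (· < ·) w k} = {k | Subseq (· < ·) (readT (Pins w)) k} :=
    Set.ext fun k => keq_subseq_lt hk k
  have e2 : {k | Subseq (· > ·) w k} = {k | Subseq (· > ·) (readT (Pins w)) k} :=
    Set.ext fun k => keq_subseq_gt hk k
  rw [e1, e2]
  exact ⟨(greatest_cols hT hnd).csSup_eq, (greatest_rows hT hnd).csSup_eq⟩

lemma RS_fst (w : List ℕ) : (RS w).1 = Pins w := by
  have aux : ∀ m, m ≤ w.length → ∀ Q : List (List ℕ),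
      ((List.range m).foldl (fun PQ i =>
        let P' := rowInsert PQ.1 (w.getD i 0)
        (P', placeInRow PQ.2 (rowOfNewCell PQ.1 P') (i + 1))) ([], Q)).1 =
      (w.take m).foldl rowInsert [] := by
    intro m
    induction m with
    | zero => intro _ Q; simp
    | succ m ih =>
      intro hm Q
      rw [List.range_succ, List.foldl_append]
      have hmw : m < w.length := by omega
      have htk : w.take (m + 1) = w.take m ++ [w[m]] := by
        rw [List.take_succ]
        simp [List.getElem?_eq_getElem hmw]
      rw [htk, List.foldl_append]
      simp only [List.foldl_cons, List.foldl_nil]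
      rw [ih (by omega) Q]
      congr 1
      rw [List.getD_eq_getElem _ _ hmw]
  have := aux w.length (le_refl _) []
  rw [List.take_length] at this
  exact this

end Schensted
/-- Let `ρ ∈ S_{2n}` (encoded by `f`) be a fixed-point-free involution
each of whose 2-cycles `(a b)` has `a ∈ {1, …, n}`, `b ∈ {n+1, …, 2n}`, and let
`ρ^NE(i) = ρ(i) - n` for `1 ≤ i ≤ n`. Then the crossing number of `ρ` equals the length
of the longest increasing subsequence of `ρ^NE(1), …, ρ^NE(n)` and the nesting number
equals the length of its longest decreasing subsequence; equivalently, the crossing number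
equals the number of columns and the nesting number the number of rows of the common shape
of `RS(ρ^NE)`. -/
theorem crossing_nesting_eq_subseq (n : ℕ) (f : ℕ → ℕ)
    (hbij : Set.BijOn f (Set.Icc 1 (2 * n)) (Set.Icc 1 (2 * n)))
    (hinv : ∀ a ∈ Set.Icc 1 (2 * n), f (f a) = a ∧ f a ≠ a)
    (hblk : ∀ a ∈ Set.Icc 1 n, n + 1 ≤ f a ∧ f a ≤ 2 * n) :
    sSup {k | HasCrossing f (2 * n) k} =
      sSup {k | ∃ a : Fin k → ℕ, StrictMono a ∧ (∀ m, 1 ≤ a m ∧ a m ≤ n) ∧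
        StrictMono fun m => f (a m) - n} ∧
    sSup {k | HasNesting f (2 * n) k} =
      sSup {k | ∃ a : Fin k → ℕ, StrictMono a ∧ (∀ m, 1 ≤ a m ∧ a m ≤ n) ∧
        StrictAnti fun m => f (a m) - n} ∧
    sSup {k | HasCrossing f (2 * n) k} =
      ((RS ((List.range n).map fun i => f (i + 1) - n)).1.getD 0 []).length ∧
    sSup {k | HasNesting f (2 * n) k} =
      (RS ((List.range n).map fun i => f (i + 1) - n)).1.length := by
  set w : List ℕ := (List.range n).map fun i => f (i + 1) - n with hw
  have hwlen : w.length = n := by simp [hw]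
  have hwget : ∀ j (hj : j < w.length), w[j] = f (j + 1) - n := by
    intro j hj
    simp [hw]
  have hfmem : ∀ a, 1 ≤ a → a ≤ n → n + 1 ≤ f a ∧ f a ≤ 2 * n := fun a h1 h2 =>
    hblk a (Set.mem_Icc.mpr ⟨h1, h2⟩)
  have hfinj : Set.InjOn f (Set.Icc 1 (2 * n)) := hbij.injOn
  have hfb : ∀ b, n + 1 ≤ b → b ≤ 2 * n → f b ≤ n ∧ 1 ≤ f b := by
    intro b hb1 hb2
    have hsub : (Finset.Icc 1 n).image f ⊆ Finset.Icc (n + 1) (2 * n) := by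
      intro c hc
      rw [Finset.mem_image] at hc
      obtain ⟨a, ha, rfl⟩ := hc
      rw [Finset.mem_Icc] at ha ⊢
      exact hfmem a ha.1 ha.2
    have hcard : (Finset.Icc (n + 1) (2 * n)).card ≤ ((Finset.Icc 1 n).image f).card := by
      rw [Finset.card_image_of_injOn, Nat.card_Icc, Nat.card_Icc]
      · omega
      · intro a ha a' ha' hEq
        rw [Finset.mem_coe, Finset.mem_Icc] at ha ha'
        exact hfinj (Set.mem_Icc.mpr ⟨ha.1, by omega⟩) (Set.mem_Icc.mpr ⟨ha'.1, by omega⟩) hEq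
    have heq := Finset.eq_of_subset_of_card_le hsub hcard
    have hbmem : b ∈ (Finset.Icc 1 n).image f := by
      rw [heq, Finset.mem_Icc]; omega
    rw [Finset.mem_image] at hbmem
    obtain ⟨a, ha, hfa⟩ := hbmem
    rw [Finset.mem_Icc] at ha
    have hia := (hinv a (Set.mem_Icc.mpr ⟨ha.1, by omega⟩)).1
    rw [hfa] at hia
    omega
  have hnodup : w.Nodup := by
    rw [hw]
    refine List.Nodup.map_on ?_ List.nodup_range
    intro i hi j hj hEq
    rw [List.mem_range] at hi hj
    obtain ⟨h1a, h1b⟩ := hfmem (i + 1) (by omega) (by omega)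
    obtain ⟨h2a, h2b⟩ := hfmem (j + 1) (by omega) (by omega)
    have hfe : f (i + 1) = f (j + 1) := by omega
    have := hfinj (Set.mem_Icc.mpr ⟨by omega, by omega⟩)
      (Set.mem_Icc.mpr ⟨by omega, by omega⟩) hfe
    omega
  have Ecross : {k | HasCrossing f (2 * n) k} =
      {k | ∃ a : Fin k → ℕ, StrictMono a ∧ (∀ m, 1 ≤ a m ∧ a m ≤ n) ∧
        StrictMono fun m => f (a m) - n} := by
    ext k
    simp only [Set.mem_setOf_eq, HasCrossing]
    constructor
    · rintro ⟨a, b, ha, hb, hm, hcr⟩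
      have hale : ∀ m, a m ≤ n := by
        intro m
        by_contra hcon
        push_neg at hcon
        obtain ⟨h1, h2, h3, h4⟩ := hm m
        obtain ⟨h5, h6⟩ := hfb (a m) (by omega) (by omega)
        omega
      refine ⟨a, ha, fun m => ⟨(hm m).1, hale m⟩, fun m m' hmm => ?_⟩
      obtain ⟨h1, h2, h3, h4⟩ := hm m
      obtain ⟨h1', h2', h3', h4'⟩ := hm m'
      obtain ⟨hf1, -⟩ := hfmem (a m) h1 (hale m)
      obtain ⟨hf2, -⟩ := hfmem (a m') h1' (hale m')
      have hbm := hb hmm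
      show f (a m) - n < f (a m') - n
      omega
    · rintro ⟨a, ha, hbd, hmono⟩
      refine ⟨a, fun m => f (a m), ha, ?_, ?_, ?_⟩
      · intro m m' hmm
        obtain ⟨hf1, -⟩ := hfmem (a m) (hbd m).1 (hbd m).2
        obtain ⟨hf2, -⟩ := hfmem (a m') (hbd m').1 (hbd m').2
        have h2 : f (a m) - n < f (a m') - n := hmono hmm
        show f (a m) < f (a m')
        omega
      · intro m
        obtain ⟨hf1, hf2⟩ := hfmem (a m) (hbd m).1 (hbd m).2
        exact ⟨(hbd m).1, hf2, rfl, by have := (hbd m).2; show a m < f (a m); omega⟩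
      · intro m m'
        obtain ⟨hf2, -⟩ := hfmem (a m') (hbd m').1 (hbd m').2
        have := (hbd m).2
        show a m < f (a m')
        omega
  have Enest : {k | HasNesting f (2 * n) k} =
      {k | ∃ a : Fin k → ℕ, StrictMono a ∧ (∀ m, 1 ≤ a m ∧ a m ≤ n) ∧
        StrictAnti fun m => f (a m) - n} := by
    ext k
    simp only [Set.mem_setOf_eq, HasNesting]
    constructor
    · rintro ⟨a, b, ha, hb, hm, hcr⟩
      have hale : ∀ m, a m ≤ n := by
        intro m
        by_contra hcon
        push_neg at hcon
        obtain ⟨h1, h2, h3, h4⟩ := hm m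
        obtain ⟨h5, h6⟩ := hfb (a m) (by omega) (by omega)
        omega
      refine ⟨a, ha, fun m => ⟨(hm m).1, hale m⟩, fun m m' hmm => ?_⟩
      obtain ⟨h1, h2, h3, h4⟩ := hm m
      obtain ⟨h1', h2', h3', h4'⟩ := hm m'
      obtain ⟨hf1, -⟩ := hfmem (a m) h1 (hale m)
      obtain ⟨hf2, -⟩ := hfmem (a m') h1' (hale m')
      have hbm := hb hmm
      show f (a m') - n < f (a m) - n
      omega
    · rintro ⟨a, ha, hbd, hmono⟩
      refine ⟨a, fun m => f (a m), ha, ?_, ?_, ?_⟩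
      · intro m m' hmm
        obtain ⟨hf1, -⟩ := hfmem (a m) (hbd m).1 (hbd m).2
        obtain ⟨hf2, -⟩ := hfmem (a m') (hbd m').1 (hbd m').2
        have h2 : f (a m') - n < f (a m) - n := hmono hmm
        show f (a m') < f (a m)
        omega
      · intro m
        obtain ⟨hf1, hf2⟩ := hfmem (a m) (hbd m).1 (hbd m).2
        exact ⟨(hbd m).1, hf2, rfl, by have := (hbd m).2; show a m < f (a m); omega⟩
      · intro m m'
        obtain ⟨hf2, -⟩ := hfmem (a m') (hbd m').1 (hbd m').2
        have := (hbd m).2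
        show a m < f (a m')
        omega
  have EincrSub : {k | ∃ a : Fin k → ℕ, StrictMono a ∧ (∀ m, 1 ≤ a m ∧ a m ≤ n) ∧
      StrictMono fun m => f (a m) - n} = {k | Subseq (· < ·) w k} := by
    ext k
    simp only [Set.mem_setOf_eq]
    constructor
    · rintro ⟨a, ha, hbd, hmono⟩
      have hidx : ∀ m : Fin k, a m - 1 < w.length := by
        intro m; rw [hwlen]; have := hbd m; omega
      have hv : ∀ m : Fin k, w.get ⟨a m - 1, hidx m⟩ = f (a m) - n := by
        intro m
        have h1 := (hbd m).1
        have h2 : a m - 1 + 1 = a m := by omega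
        rw [List.get_eq_getElem, hwget _ (hidx m), h2]
      refine ⟨(List.ofFn fun m : Fin k => (⟨a m - 1, hidx m⟩ : Fin w.length)).map w.get,
        ?_, ?_, by simp⟩
      · apply List.map_getElem_sublist
        rw [List.pairwise_ofFn]
        intro m m' hmm
        have h1 := (hbd m).1
        have h2 := ha hmm
        show (a m - 1 : ℕ) < a m' - 1
        omega
      · rw [List.pairwise_map, List.pairwise_ofFn]
        intro m m' hmm
        rw [hv m, hv m']
        exact hmono hmm
    · rintro ⟨l, hsub, hpw, rfl⟩
      obtain ⟨g, hg⟩ := List.sublist_iff_exists_fin_orderEmbedding_get_eq.mp hsub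
      have hvm : ∀ m, f ((g m : ℕ) + 1) - n = l.get m := by
        intro m
        rw [hg m, List.get_eq_getElem, hwget _ (g m).isLt]
      refine ⟨fun m => (g m : ℕ) + 1, ?_, ?_, ?_⟩
      · intro m m' hmm
        have : (g m : ℕ) < g m' := g.strictMono hmm
        show (g m : ℕ) + 1 < (g m' : ℕ) + 1
        omega
      · intro m
        have : (g m : ℕ) < w.length := (g m).isLt
        show 1 ≤ (g m : ℕ) + 1 ∧ (g m : ℕ) + 1 ≤ n
        omega
      · intro m m' hmm
        show f ((g m : ℕ) + 1) - n < f ((g m' : ℕ) + 1) - n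
        rw [hvm m, hvm m']
        exact List.pairwise_iff_get.mp hpw m m' hmm
  have EdecrSub : {k | ∃ a : Fin k → ℕ, StrictMono a ∧ (∀ m, 1 ≤ a m ∧ a m ≤ n) ∧
      StrictAnti fun m => f (a m) - n} = {k | Subseq (· > ·) w k} := by
    ext k
    simp only [Set.mem_setOf_eq]
    constructor
    · rintro ⟨a, ha, hbd, hmono⟩
      have hidx : ∀ m : Fin k, a m - 1 < w.length := by
        intro m; rw [hwlen]; have := hbd m; omega
      have hv : ∀ m : Fin k, w.get ⟨a m - 1, hidx m⟩ = f (a m) - n := by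
        intro m
        have h1 := (hbd m).1
        have h2 : a m - 1 + 1 = a m := by omega
        rw [List.get_eq_getElem, hwget _ (hidx m), h2]
      refine ⟨(List.ofFn fun m : Fin k => (⟨a m - 1, hidx m⟩ : Fin w.length)).map w.get,
        ?_, ?_, by simp⟩
      · apply List.map_getElem_sublist
        rw [List.pairwise_ofFn]
        intro m m' hmm
        have h1 := (hbd m).1
        have h2 := ha hmm
        show (a m - 1 : ℕ) < a m' - 1
        omega
      · rw [List.pairwise_map, List.pairwise_ofFn]
        intro m m' hmm
        rw [hv m, hv m']
        exact hmono hmm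
    · rintro ⟨l, hsub, hpw, rfl⟩
      obtain ⟨g, hg⟩ := List.sublist_iff_exists_fin_orderEmbedding_get_eq.mp hsub
      have hvm : ∀ m, f ((g m : ℕ) + 1) - n = l.get m := by
        intro m
        rw [hg m, List.get_eq_getElem, hwget _ (g m).isLt]
      refine ⟨fun m => (g m : ℕ) + 1, ?_, ?_, ?_⟩
      · intro m m' hmm
        have : (g m : ℕ) < g m' := g.strictMono hmm
        show (g m : ℕ) + 1 < (g m' : ℕ) + 1
        omega
      · intro m
        have : (g m : ℕ) < w.length := (g m).isLt
        show 1 ≤ (g m : ℕ) + 1 ∧ (g m : ℕ) + 1 ≤ n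
        omega
      · intro m m' hmm
        show f ((g m' : ℕ) + 1) - n < f ((g m : ℕ) + 1) - n
        rw [hvm m, hvm m']
        exact List.pairwise_iff_get.mp hpw m m' hmm
  obtain ⟨hcols, hrows⟩ := schensted hnodup
  refine ⟨by rw [Ecross], by rw [Enest], ?_, ?_⟩
  · rw [Ecross, EincrSub, RS_fst]
    exact hcols
  · rw [Enest, EdecrSub, RS_fst]
    exact hrows

end PromRS
end
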